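/- arXiv:math/0311535 — 8 statements merged into one kernel-verified Lean document; each statement's English description precedes it below -/
import Mathlib

section
/- Let X be a k-regular graph on v vertices with adjacency matrix A and least adjacency eigenvalue τ < 0. If S is an independent set in X, then |S| ≤ v/(1 - k/τ). -/
/-!
Since `τ` is the least eigenvalue of the symmetric matrix `A`, the matrix `A - τ I` is positive
semidefinite, so `τ ‖x‖² ≤ xᵀ A x` for every vector `x`. Test this with `x = v 1_S - |S| 1`,
which is `v` times the component of the indicator of `S` orthogonal to the all-ones vector.
Independence of `S` kills `1_Sᵀ A 1_S` and regularity gives `A 1 = k 1`, so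
`xᵀ A x = -k |S|² v` while `‖x‖² = v |S| (v - |S|)`. Dividing out and using `τ < 0`
rearranges `τ v |S| (v - |S|) ≤ -k |S|² v` into the bound.
-/

open Matrix

namespace Matrix

variable {n : Type*} [Fintype n]

theorem IsHermitian.posSemidef_sub_smul_one [DecidableEq n] {A : Matrix n n ℝ}
    (hA : A.IsHermitian) {τ : ℝ} (hτ : ∀ (μ : ℝ) (y : n → ℝ), y ≠ 0 → A *ᵥ y = μ • y → τ ≤ μ) :
    (A - τ • 1).PosSemidef := by
  have hB : (A - τ • 1).IsHermitian := hA.sub (by simp [IsHermitian])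
  refine hB.posSemidef_iff_eigenvalues_nonneg.mpr fun i => ?_
  set y := ⇑(hB.eigenvectorBasis i)
  have hy : y ≠ 0 := by simpa [y] using hB.eigenvectorBasis.toBasis.ne_zero i
  have hAy : A *ᵥ y = (hB.eigenvalues i + τ) • y := by
    have := hB.mulVec_eigenvectorBasis i
    rw [sub_mulVec, smul_mulVec, one_mulVec, sub_eq_iff_eq_add] at this
    rw [this, add_smul]
  show (0 : ℝ) ≤ _
  linarith [hτ _ y hy hAy]

theorem IsHermitian.mul_dotProduct_self_le {A : Matrix n n ℝ} (hA : A.IsHermitian) {τ : ℝ}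
    (hτ : ∀ (μ : ℝ) (y : n → ℝ), y ≠ 0 → A *ᵥ y = μ • y → τ ≤ μ) (x : n → ℝ) :
    τ * (x ⬝ᵥ x) ≤ x ⬝ᵥ A *ᵥ x := by
  classical
  have := (hA.posSemidef_sub_smul_one hτ).dotProduct_mulVec_nonneg x
  simp only [sub_mulVec, smul_mulVec, one_mulVec, dotProduct_sub, dotProduct_smul, star_trivial,
    smul_eq_mul] at this
  linarith

end Matrix

section IndicatorVector

variable {V : Type*} [Fintype V] {α : Type*} [CommRing α] (S : Finset V)

theorem indicator_one_dotProduct_self :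
    (S : Set V).indicator (1 : V → α) ⬝ᵥ (S : Set V).indicator 1 = S.card := by
  classical
  simp [dotProduct, Set.indicator_apply]

theorem indicator_one_dotProduct_one : (S : Set V).indicator (1 : V → α) ⬝ᵥ 1 = S.card := by
  simp [dotProduct_one, Finset.sum_indicator_subset]

theorem one_dotProduct_indicator_one : 1 ⬝ᵥ (S : Set V).indicator (1 : V → α) = S.card := by
  simp [one_dotProduct, Finset.sum_indicator_subset]

noncomputable def ratioTestVector : V → ℝ :=
  (Fintype.card V : ℝ) • (S : Set V).indicator 1 - (S.card : ℝ) • 1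

theorem ratioTestVector_dotProduct_self :
    ratioTestVector S ⬝ᵥ ratioTestVector S =
      Fintype.card V * S.card * (Fintype.card V - S.card) := by
  simp only [ratioTestVector, dotProduct_sub, sub_dotProduct, dotProduct_smul, smul_dotProduct,
    indicator_one_dotProduct_self, indicator_one_dotProduct_one, one_dotProduct_indicator_one,
    one_dotProduct_one, smul_eq_mul]
  ring

end IndicatorVector

namespace SimpleGraph

variable {V : Type*} [Fintype V] (G : SimpleGraph V) [DecidableRel G.Adj]

theorem indicator_one_dotProduct_adjMatrix_mulVec_eq_zero {α : Type*} [NonAssocSemiring α]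
    {S : Finset V} (hS : ∀ u ∈ S, ∀ w ∈ S, ¬ G.Adj u w) :
    (S : Set V).indicator 1 ⬝ᵥ G.adjMatrix α *ᵥ (S : Set V).indicator 1 = 0 := by
  rw [dotProduct_mulVec_adjMatrix]
  refine Finset.sum_eq_zero fun u _ => Finset.sum_eq_zero fun w _ => ?_
  by_cases hu : u ∈ S
  · by_cases hw : w ∈ S
    · simp [hS u hu w hw]
    · simp [hw]
  · simp [hu]

variable {G}

theorem adjMatrix_mulVec_one_of_isRegularOfDegree {α : Type*} [NonAssocSemiring α] {k : ℕ}
    (hreg : G.IsRegularOfDegree k) : G.adjMatrix α *ᵥ 1 = (k : α) • 1 :=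
  funext fun _ => by simp [hreg _]

theorem one_vecMul_adjMatrix_of_isRegularOfDegree {α : Type*} [NonAssocSemiring α] {k : ℕ}
    (hreg : G.IsRegularOfDegree k) : 1 ᵥ* G.adjMatrix α = (k : α) • 1 :=
  funext fun _ => by simp [hreg _]

theorem ratioTestVector_dotProduct_adjMatrix_mulVec {k : ℕ} (hreg : G.IsRegularOfDegree k)
    {S : Finset V} (hS : ∀ u ∈ S, ∀ w ∈ S, ¬ G.Adj u w) :
    ratioTestVector S ⬝ᵥ G.adjMatrix ℝ *ᵥ ratioTestVector S =
      -(k * S.card ^ 2 * Fintype.card V) := by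
  have hAχ : 1 ⬝ᵥ G.adjMatrix ℝ *ᵥ (S : Set V).indicator 1 = k * S.card := by
    rw [dotProduct_mulVec, one_vecMul_adjMatrix_of_isRegularOfDegree hreg, smul_dotProduct,
      one_dotProduct_indicator_one, smul_eq_mul]
  simp only [ratioTestVector, mulVec_sub, mulVec_smul, dotProduct_sub, sub_dotProduct,
    dotProduct_smul, smul_dotProduct, adjMatrix_mulVec_one_of_isRegularOfDegree hreg,
    G.indicator_one_dotProduct_adjMatrix_mulVec_eq_zero hS, hAχ, indicator_one_dotProduct_one,
    one_dotProduct_one, smul_eq_mul]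
  ring

end SimpleGraph

theorem le_div_one_sub_div_of_mul_le {τ k s n : ℝ} (hτ : τ < 0) (hk : 0 ≤ k) (hs : 0 ≤ s)
    (hsn : s ≤ n) (h : τ * (n * s * (n - s)) ≤ -(k * s ^ 2 * n)) :
    s ≤ n / (1 - k / τ) := by
  have hτk : τ - k < 0 := by linarith
  rw [one_sub_div hτ.ne, div_div_eq_mul_div, le_div_iff_of_neg hτk]
  rcases hs.eq_or_lt with rfl | hs
  · nlinarith
  · have hn : 0 < n := hs.trans_le hsn
    have : τ * (n - s) ≤ -(k * s) := by
      refine le_of_mul_le_mul_right (a := n * s) ?_ (by positivity)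
      linarith
    nlinarith

theorem ratio_bound_general
    {V : Type*} [Fintype V]
    (G : SimpleGraph V) [DecidableRel G.Adj]
    (k : ℕ) (hreg : G.IsRegularOfDegree k)
    (τ : ℝ) (hτneg : τ < 0)
    (hτ_least : ∀ (μ : ℝ) (y : V → ℝ), y ≠ 0 →
      (G.adjMatrix ℝ).mulVec y = μ • y → τ ≤ μ)
    (S : Finset V) (hS : ∀ u ∈ S, ∀ w ∈ S, ¬ G.Adj u w) :
    (S.card : ℝ) ≤ (Fintype.card V : ℝ) / (1 - (k : ℝ) / τ) := by
  have hquad := (G.isHermitian_adjMatrix ℝ).mul_dotProduct_self_le hτ_least (ratioTestVector S)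
  rw [ratioTestVector_dotProduct_self, G.ratioTestVector_dotProduct_adjMatrix_mulVec hreg hS]
    at hquad
  exact le_div_one_sub_div_of_mul_le hτneg k.cast_nonneg S.card.cast_nonneg
    (by exact_mod_cast S.card_le_univ) hquad

theorem ratio_bound
    {V : Type*} [Fintype V] [DecidableEq V]
    (G : SimpleGraph V) [DecidableRel G.Adj]
    (k : ℕ) (hreg : G.IsRegularOfDegree k)
    (τ : ℝ) (hτneg : τ < 0)
    (hτ_eigen : ∃ y : V → ℝ, y ≠ 0 ∧ (G.adjMatrix ℝ).mulVec y = τ • y)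
    (hτ_least : ∀ (μ : ℝ) (y : V → ℝ), y ≠ 0 →
      (G.adjMatrix ℝ).mulVec y = μ • y → τ ≤ μ)
    (S : Finset V) (hS : ∀ u ∈ S, ∀ w ∈ S, ¬ G.Adj u w) :
    (S.card : ℝ) ≤ (Fintype.card V : ℝ) / (1 - (k : ℝ) / τ) :=
  ratio_bound_general G k hreg τ hτneg hτ_least S hS
end

section
/- Let X be a k-regular graph on v vertices with least adjacency eigenvalue τ. If S is an independent set with |S| = v/(1 - k/τ) and x is the characteristic vector of S, then x - (|S|/v)·1 is an eigenvector of A(X) with eigenvalue τ. -/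
/-!
Since `τ` is the least eigenvalue of the symmetric matrix `A = A(X)`, the matrix `A - τ I` is
positive semidefinite, so `zᵀ A z ≥ τ zᵀ z` for every `z`, and equality forces `(A - τ I) z = 0`.
For `z = x - (s / v) 1` with `s = |S|`, regularity and `xᵀ A x = 0` give `zᵀ A z = -k s² / v` and
`zᵀ z = s (v - s) / v`; when `s = v / (1 - k / τ)` (Hoffman's ratio bound is attained) these
satisfy `zᵀ A z ≤ τ zᵀ z`, hence `A z = τ z`.
-/

open Matrix

namespace Matrix

variable {n : Type*} [Fintype n]

theorem IsHermitian.mulVec_eq_smul_of_dotProduct_mulVec_le {A : Matrix n n ℝ}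
    (hA : A.IsHermitian) {τ : ℝ} (hτ : ∀ (μ : ℝ) (y : n → ℝ), y ≠ 0 → A *ᵥ y = μ • y → τ ≤ μ)
    {z : n → ℝ} (hz : z ⬝ᵥ A *ᵥ z ≤ τ * (z ⬝ᵥ z)) : A *ᵥ z = τ • z := by
  classical
  have hM := hA.posSemidef_sub_smul_one hτ
  have hMz : (A - τ • 1) *ᵥ z = A *ᵥ z - τ • z := by rw [sub_mulVec, smul_mulVec, one_mulVec]
  have hq : z ⬝ᵥ (A - τ • 1) *ᵥ z = 0 := by
    refine le_antisymm ?_ (by simpa using hM.re_dotProduct_nonneg z)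
    rw [hMz, dotProduct_sub, dotProduct_smul, smul_eq_mul]
    linarith
  rw [← sub_eq_zero, ← hMz]
  exact (hM.dotProduct_mulVec_zero_iff z).mp (by simpa using hq)

theorem dotProduct_mulVec_sub_smul_one {R : Type*} [CommRing R] {A : Matrix n n R}
    (hA : A.IsSymm) {k : R} (hA1 : A *ᵥ 1 = k • 1) (x : n → R) (c : R) :
    (x - c • 1) ⬝ᵥ A *ᵥ (x - c • 1)
      = x ⬝ᵥ A *ᵥ x - 2 * c * k * (x ⬝ᵥ 1) + c ^ 2 * k * Fintype.card n := by
  have h1A : (1 : n → R) ⬝ᵥ A *ᵥ x = k * (x ⬝ᵥ 1) := by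
    rw [dotProduct_mulVec, ← mulVec_transpose, hA.eq, hA1, smul_dotProduct, dotProduct_comm,
      smul_eq_mul]
  simp only [mulVec_sub, mulVec_smul, hA1, sub_dotProduct, dotProduct_sub, smul_dotProduct,
    dotProduct_smul, h1A, one_dotProduct_one, smul_eq_mul]
  ring

theorem dotProduct_sub_smul_one_self {R : Type*} [CommRing R] (x : n → R) (c : R) :
    (x - c • 1) ⬝ᵥ (x - c • 1) = x ⬝ᵥ x - 2 * c * (x ⬝ᵥ 1) + c ^ 2 * Fintype.card n := by
  classical
  simpa only [one_mulVec, mul_one] using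
    dotProduct_mulVec_sub_smul_one (k := 1) isSymm_one (by rw [one_mulVec, one_smul]) x c

end Matrix

namespace SimpleGraph

variable {V α : Type*} [Fintype V] (G : SimpleGraph V) [DecidableRel G.Adj]

theorem adjMatrix_mulVec_one_of_regular [NonAssocSemiring α] {d : ℕ}
    (hd : G.IsRegularOfDegree d) : G.adjMatrix α *ᵥ 1 = (d : α) • 1 := by
  ext v
  simpa using G.adjMatrix_mulVec_const_apply_of_regular (a := (1 : α)) hd (v := v)

theorem dotProduct_mulVec_adjMatrix_eq_zero_of_isIndepSet [NonAssocSemiring α] {S : Set V}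
    (hS : G.IsIndepSet S) {x : V → α} (hx : ∀ u ∉ S, x u = 0) :
    x ⬝ᵥ G.adjMatrix α *ᵥ x = 0 := by
  rw [dotProduct_mulVec_adjMatrix]
  refine Finset.sum_eq_zero fun u _ => Finset.sum_eq_zero fun w _ => ?_
  by_cases huw : G.Adj u w
  · by_cases hu : u ∈ S
    · by_cases hw : w ∈ S
      · exact absurd huw (hS hu hw huw.ne)
      · simp [hx w hw]
    · simp [hx u hu]
  · simp [huw]

end SimpleGraph

/-- `s (k s + τ (n - s)) / n` is the gap `τ zᵀ z - zᵀ A z` for the centred characteristic vector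
`z`; it vanishes unless `τ = 0`, in which case `s = n`. -/
theorem ratio_bound_slack_nonneg {k τ n s : ℝ} (hk : 0 ≤ k) (hs : s = n / (1 - k / τ)) :
    0 ≤ s * (k * s + τ * (n - s)) := by
  rcases eq_or_ne τ 0 with rfl | hτ
  · simp only [div_zero, sub_zero, div_one] at hs
    rw [hs, sub_self, zero_mul, add_zero]
    nlinarith [mul_nonneg hk (mul_self_nonneg n)]
  rcases eq_or_ne (1 - k / τ) 0 with hd | hd
  · simp [hs, hd]
  have hslack : k * s + τ * (n - s) = 0 := by
    rw [eq_div_iff hd] at hs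
    field_simp at hs
    linear_combination -hs
  simp [hslack]

theorem ratio_bound_equality_eigenvector_general
    {V : Type*} [Fintype V] [DecidableEq V]
    (G : SimpleGraph V) [DecidableRel G.Adj]
    (k : ℕ) (hreg : G.IsRegularOfDegree k)
    (τ : ℝ)
    (hτ_least : ∀ (μ : ℝ) (y : V → ℝ), y ≠ 0 →
      (G.adjMatrix ℝ).mulVec y = μ • y → τ ≤ μ)
    (S : Finset V) (hS : ∀ u ∈ S, ∀ w ∈ S, ¬ G.Adj u w)
    (hcard : (S.card : ℝ) = (Fintype.card V : ℝ) / (1 - (k : ℝ) / τ))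
    (x : V → ℝ) (hx : x = fun u => if u ∈ S then (1 : ℝ) else 0) :
    (G.adjMatrix ℝ).mulVec (x - ((S.card : ℝ) / (Fintype.card V : ℝ)) • 1)
      = τ • (x - ((S.card : ℝ) / (Fintype.card V : ℝ)) • 1) := by
  rcases isEmpty_or_nonempty V with hV | hV
  · exact funext isEmptyElim
  have hn : (0 : ℝ) < Fintype.card V := by exact_mod_cast Fintype.card_pos
  have hx1 : x ⬝ᵥ 1 = S.card := by simp [hx, dotProduct_one]
  have hxx : x ⬝ᵥ x = S.card := by simp [hx, dotProduct]
  have hxAx : x ⬝ᵥ G.adjMatrix ℝ *ᵥ x = 0 :=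
    G.dotProduct_mulVec_adjMatrix_eq_zero_of_isIndepSet (S := S)
      (fun u hu w hw _ => hS u hu w hw) (by simp [hx])
  have hA1 : G.adjMatrix ℝ *ᵥ 1 = (k : ℝ) • 1 := G.adjMatrix_mulVec_one_of_regular hreg
  refine (G.isHermitian_adjMatrix ℝ).mulVec_eq_smul_of_dotProduct_mulVec_le hτ_least ?_
  rw [dotProduct_mulVec_sub_smul_one (G.isSymm_adjMatrix (α := ℝ)) hA1,
    dotProduct_sub_smul_one_self, hxAx, hxx, hx1]
  field_simp
  linear_combination ratio_bound_slack_nonneg k.cast_nonneg hcard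

theorem ratio_bound_equality_eigenvector
    {V : Type*} [Fintype V] [DecidableEq V]
    (G : SimpleGraph V) [DecidableRel G.Adj]
    (k : ℕ) (hreg : G.IsRegularOfDegree k)
    (τ : ℝ)
    (hτ_eigen : ∃ y : V → ℝ, y ≠ 0 ∧ (G.adjMatrix ℝ).mulVec y = τ • y)
    (hτ_least : ∀ (μ : ℝ) (y : V → ℝ), y ≠ 0 →
      (G.adjMatrix ℝ).mulVec y = μ • y → τ ≤ μ)
    (S : Finset V) (hS : ∀ u ∈ S, ∀ w ∈ S, ¬ G.Adj u w)
    (hcard : (S.card : ℝ) = (Fintype.card V : ℝ) / (1 - (k : ℝ) / τ))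
    (x : V → ℝ) (hx : x = fun u => if u ∈ S then (1 : ℝ) else 0) :
    (G.adjMatrix ℝ).mulVec (x - ((S.card : ℝ) / (Fintype.card V : ℝ)) • 1)
      = τ • (x - ((S.card : ℝ) / (Fintype.card V : ℝ)) • 1) :=
  ratio_bound_equality_eigenvector_general G k hreg τ hτ_least S hS hcard x hx
end

section
/- If π and σ are two partitions of {1,…,9} each with three cells of size three, then the number of nonempty cells of their common refinement π ∧ σ (i.e., the number of nonempty intersections of a cell of π with a cell of σ) is 3, 5, 6, 7 or 9. -/
/-- A partition of `{1,…,9}` (modelled as `Fin 9`) into three cells of size three,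
represented as the finset of its cells. -/
def IsPartition33 (P : Finset (Finset (Fin 9))) : Prop :=
  P.card = 3 ∧ (∀ c ∈ P, c.card = 3) ∧ P.sup id = Finset.univ

/-- Two partitions are *skew* if each cell of one meets each cell of the other
in exactly one point.  This is the adjacency relation of the graph `P(3³)`. -/
def Skew (P Q : Finset (Finset (Fin 9))) : Prop :=
  ∀ c ∈ P, ∀ d ∈ Q, (c ∩ d).card = 1

/-- All triples of naturals summing to 3. -/
def rows3 : List (ℕ × ℕ × ℕ) :=
  [(0,0,3),(0,1,2),(0,2,1),(0,3,0),(1,0,2),(1,1,1),(1,2,0),(2,0,1),(2,1,0),(3,0,0)]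

lemma mem_rows3 {a b c : ℕ} (h : a + b + c = 3) : (a, b, c) ∈ rows3 := by
  have ha : a ≤ 3 := by omega
  have hb : b ≤ 3 := by omega
  have hc : c ≤ 3 := by omega
  interval_cases a <;> interval_cases b <;> interval_cases c <;>
    first | omega | simp [rows3]

lemma key33 : ∀ t1 ∈ rows3, ∀ t2 ∈ rows3, ∀ t3 ∈ rows3,
    t1.1 + t2.1 + t3.1 = 3 → t1.2.1 + t2.2.1 + t3.2.1 = 3 → t1.2.2 + t2.2.2 + t3.2.2 = 3 →
    ((if t1.1 = 0 then 0 else 1) + (if t1.2.1 = 0 then 0 else 1) + (if t1.2.2 = 0 then 0 else 1)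
    + (if t2.1 = 0 then 0 else 1) + (if t2.2.1 = 0 then 0 else 1) + (if t2.2.2 = 0 then 0 else 1)
    + (if t3.1 = 0 then 0 else 1) + (if t3.2.1 = 0 then 0 else 1) + (if t3.2.2 = 0 then 0 else 1))
      ∈ ({3,5,6,7,9} : Finset ℕ) := by
  decide

/-- A 3×3 matrix of naturals with all row and column sums 3 has
3, 5, 6, 7 or 9 nonzero entries. -/
theorem matA {a b c d e f g h i : ℕ}
    (h1 : a + b + c = 3) (h2 : d + e + f = 3) (h3 : g + h + i = 3)
    (h4 : a + d + g = 3) (h5 : b + e + h = 3) (h6 : c + f + i = 3) :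
    ((if a = 0 then 0 else 1) + (if b = 0 then 0 else 1) + (if c = 0 then 0 else 1)
    + (if d = 0 then 0 else 1) + (if e = 0 then 0 else 1) + (if f = 0 then 0 else 1)
    + (if g = 0 then 0 else 1) + (if h = 0 then 0 else 1) + (if i = 0 then 0 else 1))
      ∈ ({3,5,6,7,9} : Finset ℕ) :=
  key33 _ (mem_rows3 h1) _ (mem_rows3 h2) _ (mem_rows3 h3) h4 h5 h6

lemma part_biUnion {P : Finset (Finset (Fin 9))} (hP : IsPartition33 P) :
    P.biUnion id = Finset.univ := by
  rw [← Finset.sup_eq_biUnion]; exact hP.2.2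

lemma part_disjoint {P : Finset (Finset (Fin 9))} (hP : IsPartition33 P) :
    ∀ c ∈ P, ∀ c' ∈ P, c ≠ c' → Disjoint c c' := by
  obtain ⟨h1, h2, h3⟩ := hP
  intro c hc c' hc' hne
  by_contra hdis
  obtain ⟨x, hxc, hxc'⟩ := Finset.not_disjoint_iff.mp hdis
  have h9 : (P.biUnion id).card = 9 := by
    rw [part_biUnion ⟨h1, h2, h3⟩]; simp
  set R := (P.erase c).erase c' with hR
  have hc'e : c' ∈ P.erase c := Finset.mem_erase.mpr ⟨hne.symm, hc'⟩
  have hPeq : P = insert c (insert c' R) := by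
    rw [hR, Finset.insert_erase hc'e, Finset.insert_erase hc]
  have hcardR : R.card = 1 := by
    rw [hR, Finset.card_erase_of_mem hc'e, Finset.card_erase_of_mem hc, h1]
  have hsub : ∀ r ∈ R, r ∈ P := fun r hr =>
    Finset.mem_of_mem_erase (Finset.mem_of_mem_erase hr)
  have hBR : (R.biUnion id).card ≤ 3 := by
    calc (R.biUnion id).card ≤ ∑ r ∈ R, (id r).card := Finset.card_biUnion_le
      _ ≤ R.card * 3 := Finset.sum_le_card_nsmul _ _ 3 (fun r hr => le_of_eq (h2 r (hsub r hr)))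
      _ = 3 := by rw [hcardR]
  have hcc' : (c ∪ c').card ≤ 5 := by
    have := Finset.card_union_add_card_inter c c'
    have h1' : 1 ≤ (c ∩ c').card := Finset.card_pos.mpr ⟨x, Finset.mem_inter.mpr ⟨hxc, hxc'⟩⟩
    have := h2 c hc
    have := h2 c' hc'
    omega
  have : (P.biUnion id).card ≤ 8 := by
    rw [hPeq, Finset.biUnion_insert, Finset.biUnion_insert]
    calc (c ∪ (c' ∪ R.biUnion id)).card = ((c ∪ c') ∪ R.biUnion id).card := by
          rw [Finset.union_assoc]
      _ ≤ (c ∪ c').card + (R.biUnion id).card := Finset.card_union_le _ _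
      _ ≤ 8 := by omega
  omega

lemma row_sum {Q : Finset (Finset (Fin 9))} (hQ : IsPartition33 Q)
    {c : Finset (Fin 9)} (hc : c.card = 3) : ∑ d ∈ Q, (c ∩ d).card = 3 := by
  have hdisj : ∀ d ∈ Q, ∀ d' ∈ Q, d ≠ d' → Disjoint (c ∩ d) (c ∩ d') := by
    intro d hd d' hd' hne
    exact (part_disjoint hQ d hd d' hd' hne).mono Finset.inter_subset_right
      Finset.inter_subset_right
  rw [← Finset.card_biUnion hdisj]
  have : Q.biUnion (fun d => c ∩ d) = c := by
    ext x
    simp only [Finset.mem_biUnion, Finset.mem_inter]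
    constructor
    · rintro ⟨d, _, hx, _⟩; exact hx
    · intro hx
      have : x ∈ Q.biUnion id := by rw [part_biUnion hQ]; simp
      obtain ⟨d, hd, hxd⟩ := Finset.mem_biUnion.mp this
      exact ⟨d, hd, hx, hxd⟩
  rw [this, hc]

theorem meet_cell_count (P Q : Finset (Finset (Fin 9)))
    (hP : IsPartition33 P) (hQ : IsPartition33 Q) :
    {e : Finset (Fin 9) | e ≠ ∅ ∧ ∃ c ∈ P, ∃ d ∈ Q, e = c ∩ d}.ncard
      ∈ ({3, 5, 6, 7, 9} : Set ℕ) := by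
  classical
  set U : Finset (Finset (Fin 9) × Finset (Fin 9)) :=
    (P ×ˢ Q).filter (fun p => p.1 ∩ p.2 ≠ ∅) with hU
  have hset : {e : Finset (Fin 9) | e ≠ ∅ ∧ ∃ c ∈ P, ∃ d ∈ Q, e = c ∩ d}
      = ↑(U.image fun p => p.1 ∩ p.2) := by
    ext e
    simp only [Set.mem_setOf_eq, Finset.coe_image, Set.mem_image, Finset.mem_coe,
      hU, Finset.mem_filter, Finset.mem_product]
    constructor
    · rintro ⟨hne, c, hc, d, hd, rfl⟩
      exact ⟨(c, d), ⟨⟨hc, hd⟩, hne⟩, rfl⟩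
    · rintro ⟨⟨c, d⟩, ⟨⟨hc, hd⟩, hne⟩, rfl⟩
      exact ⟨hne, c, hc, d, hd, rfl⟩
  rw [hset, Set.ncard_coe_finset]
  have hinj : Set.InjOn (fun p : Finset (Fin 9) × Finset (Fin 9) => p.1 ∩ p.2) ↑U := by
    rintro ⟨c, d⟩ hcd ⟨c', d'⟩ hcd' heq
    simp only [hU, Finset.coe_filter, Set.mem_setOf_eq, Finset.mem_product] at hcd hcd'
    simp only at heq
    obtain ⟨x, hx⟩ := Finset.nonempty_iff_ne_empty.mpr hcd.2
    have hx' : x ∈ c' ∩ d' := heq ▸ hx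
    simp only [Finset.mem_inter] at hx hx'
    have hcc : c = c' := by
      by_contra hne
      exact Finset.disjoint_left.mp (part_disjoint hP c hcd.1.1 c' hcd'.1.1 hne) hx.1 hx'.1
    have hdd : d = d' := by
      by_contra hne
      exact Finset.disjoint_left.mp (part_disjoint hQ d hcd.1.2 d' hcd'.1.2 hne) hx.2 hx'.2
    rw [hcc, hdd]
  rw [Finset.card_image_of_injOn hinj]
  have hcard : U.card = ∑ c ∈ P, ∑ d ∈ Q, if (c ∩ d).card = 0 then 0 else 1 := by
    rw [hU, Finset.card_filter, Finset.sum_product]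
    refine Finset.sum_congr rfl fun c _ => Finset.sum_congr rfl fun d _ => ?_
    by_cases h : c ∩ d = ∅ <;> simp [h, Finset.card_eq_zero]
  rw [hcard]
  obtain ⟨hP1, hP2, hP3⟩ := hP
  obtain ⟨hQ1, hQ2, hQ3⟩ := hQ
  obtain ⟨a1, a2, a3, ha12, ha13, ha23, rfl⟩ := Finset.card_eq_three.mp hP1
  obtain ⟨b1, b2, b3, hb12, hb13, hb23, rfl⟩ := Finset.card_eq_three.mp hQ1
  have hQ' : IsPartition33 {b1, b2, b3} := ⟨hQ1, hQ2, hQ3⟩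
  have hP' : IsPartition33 {a1, a2, a3} := ⟨hP1, hP2, hP3⟩
  have expandQ : ∀ c : Finset (Fin 9),
      ∑ d ∈ ({b1, b2, b3} : Finset (Finset (Fin 9))), (c ∩ d).card
        = (c ∩ b1).card + (c ∩ b2).card + (c ∩ b3).card := by
    intro c
    rw [Finset.sum_insert (by simp [hb12, hb13]), Finset.sum_insert (by simp [hb23]),
      Finset.sum_singleton, add_assoc]
  have expandP : ∀ d : Finset (Fin 9),
      ∑ c ∈ ({a1, a2, a3} : Finset (Finset (Fin 9))), (c ∩ d).card
        = (a1 ∩ d).card + (a2 ∩ d).card + (a3 ∩ d).card := by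
    intro d
    rw [Finset.sum_insert (by simp [ha12, ha13]), Finset.sum_insert (by simp [ha23]),
      Finset.sum_singleton, add_assoc]
  have hrow : ∀ c ∈ ({a1, a2, a3} : Finset (Finset (Fin 9))),
      (c ∩ b1).card + (c ∩ b2).card + (c ∩ b3).card = 3 := by
    intro c hc
    rw [← expandQ c]
    exact row_sum hQ' (hP2 c hc)
  have hcol : ∀ d ∈ ({b1, b2, b3} : Finset (Finset (Fin 9))),
      (a1 ∩ d).card + (a2 ∩ d).card + (a3 ∩ d).card = 3 := by
    intro d hd
    rw [← expandP d]
    have := row_sum hP' (hQ2 d hd)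
    rw [← this]
    exact Finset.sum_congr rfl fun c _ => by rw [Finset.inter_comm]
  have key := matA
    (hrow a1 (by simp)) (hrow a2 (by simp)) (hrow a3 (by simp))
    (hcol b1 (by simp)) (hcol b2 (by simp)) (hcol b3 (by simp))
  have expand2 : ∀ c : Finset (Fin 9),
      (∑ d ∈ ({b1, b2, b3} : Finset (Finset (Fin 9))),
          if (c ∩ d).card = 0 then 0 else 1)
        = (if (c ∩ b1).card = 0 then 0 else 1) + (if (c ∩ b2).card = 0 then 0 else 1)
          + (if (c ∩ b3).card = 0 then 0 else 1) := by
    intro c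
    rw [Finset.sum_insert (by simp [hb12, hb13]), Finset.sum_insert (by simp [hb23]),
      Finset.sum_singleton, add_assoc]
  have hna1 : a1 ∉ ({a2, a3} : Finset (Finset (Fin 9))) := by simp [ha12, ha13]
  have hna2 : a2 ∉ ({a3} : Finset (Finset (Fin 9))) := by simp [ha23]
  rw [Finset.sum_insert hna1, Finset.sum_insert hna2,
    Finset.sum_singleton, expand2, expand2, expand2]
  simp only [Finset.mem_insert, Finset.mem_singleton] at key ⊢
  simp only [Set.mem_insert_iff, Set.mem_singleton_iff]
  omega
end

section
/- The matrix M (partitions of {1,…,9} into three 3-cells versus 2-subsets contained in a cell) has rank 28. -/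
open scoped Classical

/-- Row index type: the 280 partitions of type `3³`. -/
abbrev Part33 := {P : Finset (Finset (Fin 9)) // IsPartition33 P}

/-- Column index type: the 36 two-element subsets of `{1,…,9}`. -/
abbrev Pair9 := {e : Finset (Fin 9) // e.card = 2}

/-- The 280 × 36 incidence matrix `M`: entry 1 iff the 2-subset is contained
in a cell of the partition. -/
noncomputable def M : Matrix Part33 Pair9 ℝ :=
  Matrix.of fun P e => if ∃ c ∈ P.1, e.1 ⊆ c then 1 else 0

/-!
Every point `v` lies in exactly two of the pairs inside its cell, so `M` maps the incidence vector
of the pairs through `v` to the constant vector `2`; the differences of these incidence vectors span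
an `8`-dimensional subspace of `ker M`. Conversely, the rows of four partitions obtained from one
another by exchanging points between two cells show that every `x ∈ ker M` satisfies the four-cycle
relations `x{q,a} + x{r,b} = x{q,b} + x{r,a}`. If moreover `x` vanishes on the pairs through `8`,
it is constant on the other pairs, and one row, which contains seven of them, forces `x = 0`. Hence
`dim ker M = 8` and `rank M = 36 - 8 = 28`.
-/

open Finset Matrix

theorem Matrix.rank_add_finrank_ker {m n K : Type*} [Fintype n] [Field K] (A : Matrix m n K) :
    A.rank + Module.finrank K (LinearMap.ker A.mulVecLin) = Fintype.card n := by
  rw [Matrix.rank, LinearMap.finrank_range_add_finrank_ker, Module.finrank_fintype_fun_eq_card]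

namespace IsPartition33

variable {P : Finset (Finset (Fin 9))}

theorem exists_mem (hP : IsPartition33 P) (v : Fin 9) : ∃ c ∈ P, v ∈ c := by
  have hv : v ∈ P.sup id := hP.2.2 ▸ mem_univ v
  simpa using hv

theorem card_filter_mem (hP : IsPartition33 P) (v : Fin 9) : #{c ∈ P | v ∈ c} = 1 := by
  have hpos : ∀ a ∈ (univ : Finset (Fin 9)), 1 ≤ #{c ∈ P | a ∈ c} := fun a _ => by
    obtain ⟨c, hc, hac⟩ := hP.exists_mem a
    exact card_pos.mpr ⟨c, mem_filter.mpr ⟨hc, hac⟩⟩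
  have hsum : ∑ a, #{c ∈ P | a ∈ c} = ∑ _a : Fin 9, (1 : ℕ) :=
    calc ∑ a, #{c ∈ P | a ∈ c} = ∑ c ∈ P, #{a | a ∈ c} := by
          simp only [card_eq_sum_ones, sum_filter]; exact Finset.sum_comm
      _ = ∑ c ∈ P, #c := by simp
      _ = ∑ _a : Fin 9, (1 : ℕ) := by simp [sum_congr rfl hP.2.1, hP.1]
  exact ((sum_eq_sum_iff_of_le hpos).mp hsum.symm v (mem_univ v)).symm

theorem eq_of_mem_of_mem (hP : IsPartition33 P) {c d : Finset (Fin 9)} (hc : c ∈ P) (hd : d ∈ P)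
    {v : Fin 9} (hvc : v ∈ c) (hvd : v ∈ d) : c = d :=
  card_le_one.mp (hP.card_filter_mem v).le c (mem_filter.mpr ⟨hc, hvc⟩) d
    (mem_filter.mpr ⟨hd, hvd⟩)

end IsPartition33

/-- The coordinate at the pair `{a, b}`; junk `0` when `a = b`. -/
noncomputable def onPair (a b : Fin 9) : (Pair9 → ℝ) →ₗ[ℝ] ℝ :=
  if h : a = b then 0 else LinearMap.proj ⟨{a, b}, card_pair h⟩

theorem onPair_comm (a b : Fin 9) (x : Pair9 → ℝ) : onPair a b x = onPair b a x := by
  by_cases h : a = b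
  · rw [h]
  · simp only [onPair, h, Ne.symm h, dite_false, LinearMap.proj_apply, pair_comm]

theorem apply_eq_onPair {x : Pair9 → ℝ} {e : Pair9} {a b : Fin 9} (hab : a ≠ b)
    (he : e.1 = {a, b}) : x e = onPair a b x := by
  simp only [onPair, hab, dite_false, LinearMap.proj_apply]
  exact congrArg x (Subtype.ext he)

theorem sum_pairs_subset_triple (x : Pair9 → ℝ) {a b c : Fin 9} (hab : a ≠ b) (hac : a ≠ c)
    (hbc : b ≠ c) :
    ∑ e : Pair9 with e.1 ⊆ {a, b, c}, x e = onPair a b x + onPair a c x + onPair b c x := by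
  have hpairs : ({e : Pair9 | e.1 ⊆ {a, b, c}} : Finset Pair9) =
      {⟨{a, b}, card_pair hab⟩, ⟨{a, c}, card_pair hac⟩, ⟨{b, c}, card_pair hbc⟩} := by
    ext ⟨e, he⟩
    obtain ⟨u, v, huv, rfl⟩ := card_eq_two.mp he
    simp only [mem_filter, mem_univ, true_and, mem_insert, mem_singleton, Subtype.mk.injEq,
      insert_subset_iff, singleton_subset_iff, ← coe_inj, coe_pair, Set.pair_eq_pair_iff]
    grind
  rw [hpairs, sum_insert, sum_pair]
  · simp [onPair, hab, hac, hbc, add_assoc]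
  all_goals
    simp only [mem_insert, mem_singleton, not_or, ne_eq, Subtype.mk.injEq, ← coe_inj, coe_pair,
      Set.pair_eq_pair_iff]
    grind

theorem M_apply_eq_sum (P : Part33) (e : Pair9) :
    M P e = ∑ c ∈ P.1, if e.1 ⊆ c then 1 else 0 := by
  obtain ⟨a, ha⟩ : e.1.Nonempty := card_pos.mp (by rw [e.2]; norm_num)
  rw [sum_boole, M, of_apply]
  split_ifs with h
  · obtain ⟨c, hc, hec⟩ := h
    have : ({c ∈ P.1 | e.1 ⊆ c} : Finset _) = {c} := by
      refine eq_singleton_iff_unique_mem.mpr ⟨mem_filter.mpr ⟨hc, hec⟩, fun d hd => ?_⟩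
      obtain ⟨hd, hed⟩ := mem_filter.mp hd
      exact P.2.eq_of_mem_of_mem hd hc (hed ha) (hec ha)
    simp [this]
  · simp only [not_exists, not_and] at h
    simp [filter_false_of_mem h]

theorem M_mulVec_apply (x : Pair9 → ℝ) (P : Part33) :
    (M *ᵥ x) P = ∑ c ∈ P.1, ∑ e : Pair9 with e.1 ⊆ c, x e := by
  simp only [mulVec, dotProduct, M_apply_eq_sum, sum_mul, ite_mul, one_mul, zero_mul]
  rw [Finset.sum_comm]
  simp [sum_filter]

noncomputable def incidence (v : Fin 9) : Pair9 → ℝ := fun e => if v ∈ e.1 then 1 else 0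

theorem onPair_incidence {a b : Fin 9} (hab : a ≠ b) (v : Fin 9) :
    onPair a b (incidence v) = (if v = a then 1 else 0) + (if v = b then 1 else 0) := by
  simp only [onPair, hab, dite_false, LinearMap.proj_apply, incidence, mem_insert, mem_singleton]
  by_cases hva : v = a <;> by_cases hvb : v = b <;> simp_all

theorem sum_incidence_subset {c : Finset (Fin 9)} (hc : #c = 3) (v : Fin 9) :
    ∑ e : Pair9 with e.1 ⊆ c, incidence v e = if v ∈ c then 2 else 0 := by
  obtain ⟨a, b, d, hab, had, hbd, rfl⟩ := card_eq_three.mp hc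
  rw [sum_pairs_subset_triple _ hab had hbd, onPair_incidence hab, onPair_incidence had,
    onPair_incidence hbd]
  by_cases hva : v = a <;> by_cases hvb : v = b <;> by_cases hvd : v = d <;> simp_all <;> norm_num

theorem M_mulVec_incidence (v : Fin 9) : M *ᵥ incidence v = fun _ => 2 := by
  funext P
  rw [M_mulVec_apply, sum_congr rfl fun c hc => sum_incidence_subset (P.2.2.1 c hc) v,
    ← sum_filter, sum_const, P.2.card_filter_mem v, one_smul]

def triples (f : Fin 9 → Fin 9) : Finset (Finset (Fin 9)) :=
  {{f 0, f 1, f 2}, {f 3, f 4, f 5}, {f 6, f 7, f 8}}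

section triples

variable {f : Fin 9 → Fin 9}

theorem image_triple_ne (hf : Function.Injective f) {i j k l m n : Fin 9}
    (h : i ∉ ({l, m, n} : Finset (Fin 9))) :
    ({f i, f j, f k} : Finset (Fin 9)) ≠ {f l, f m, f n} :=
  ne_of_mem_of_not_mem' (mem_insert_self _ _) (by simpa [hf.eq_iff] using h)

theorem card_image_triple (hf : Function.Injective f) {i j k : Fin 9} (hij : i ≠ j) (hik : i ≠ k)
    (hjk : j ≠ k) :
    #({f i, f j, f k} : Finset (Fin 9)) = 3 :=
  card_eq_three.mpr ⟨_, _, _, hf.ne hij, hf.ne hik, hf.ne hjk, rfl⟩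

theorem isPartition33_triples (hf : Function.Injective f) : IsPartition33 (triples f) := by
  refine ⟨card_eq_three.mpr ⟨_, _, _, image_triple_ne hf (by decide),
    image_triple_ne hf (by decide), image_triple_ne hf (by decide), rfl⟩, ?_, ?_⟩
  · simp only [triples, mem_insert, mem_singleton]
    rintro c (rfl | rfl | rfl) <;> exact card_image_triple hf (by decide) (by decide) (by decide)
  · refine eq_univ_of_forall fun v => ?_
    obtain ⟨i, rfl⟩ := (Finite.injective_iff_surjective.mp hf) v
    fin_cases i <;> simp [triples]

theorem M_mulVec_triples (hf : Function.Injective f) (x : Pair9 → ℝ) :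
    (M *ᵥ x) ⟨triples f, isPartition33_triples hf⟩ =
      (onPair (f 0) (f 1) x + onPair (f 0) (f 2) x + onPair (f 1) (f 2) x) +
      (onPair (f 3) (f 4) x + onPair (f 3) (f 5) x + onPair (f 4) (f 5) x) +
      (onPair (f 6) (f 7) x + onPair (f 6) (f 8) x + onPair (f 7) (f 8) x) := by
  rw [M_mulVec_apply]
  dsimp only
  rw [triples, sum_insert, sum_pair, sum_pairs_subset_triple, sum_pairs_subset_triple,
    sum_pairs_subset_triple]
  · ring
  all_goals first
    | exact hf.ne (by decide)
    | exact image_triple_ne hf (by decide)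
    | simp only [mem_insert, mem_singleton, not_or]
      exact ⟨image_triple_ne hf (by decide), image_triple_ne hf (by decide)⟩

end triples

theorem onPair_add_onPair_of_mulVec_eq_zero {x : Pair9 → ℝ} (hx : M *ᵥ x = 0) {q r a b : Fin 9}
    (hqr : q ≠ r) (hqa : q ≠ a) (hqb : q ≠ b) (hra : r ≠ a) (hrb : r ≠ b) (hab : a ≠ b) :
    onPair q a x + onPair r b x = onPair q b x + onPair r a x := by
  obtain ⟨σ, hσ⟩ := Equiv.Perm.exists_extending_pair ![(0 : Fin 9), 1, 2, 3] ![q, r, a, b]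
    (by decide) (by intro i j; fin_cases i <;> fin_cases j <;> simp_all [eq_comm])
  obtain ⟨rfl, rfl, rfl, rfl⟩ : σ 0 = q ∧ σ 1 = r ∧ σ 2 = a ∧ σ 3 = b :=
    ⟨hσ 0, hσ 1, hσ 2, hσ 3⟩
  -- Exchanging `a ↔ b` and `q ↔ r` between the cells `{q, a, σ 4}` and `{r, b, σ 5}` gives four
  -- partitions whose rows, with signs `+ - - +`, add up to twice the four-cycle.
  have row (τ : Fin 9 → Fin 9) (hτ : Function.Injective τ) :=
    (M_mulVec_triples (σ.injective.comp hτ) x).symm.trans (congrFun hx _)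
  have h1 := row ![0, 2, 4, 1, 3, 5, 6, 7, 8] (by decide)
  have h2 := row ![0, 3, 4, 1, 2, 5, 6, 7, 8] (by decide)
  have h3 := row ![1, 2, 4, 0, 3, 5, 6, 7, 8] (by decide)
  have h4 := row ![1, 3, 4, 0, 2, 5, 6, 7, 8] (by decide)
  simp only [Function.comp_apply, Matrix.cons_val, Pi.zero_apply] at h1 h2 h3 h4
  linear_combination (h1 - h2 - h3 + h4) / 2

theorem eq_zero_of_mulVec_eq_zero_of_onPair_eight {x : Pair9 → ℝ} (hx : M *ᵥ x = 0)
    (h8 : ∀ v, v ≠ 8 → onPair v 8 x = 0) : x = 0 := by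
  have shift {q r s : Fin 9} (hq : q ≠ 8) (hr : r ≠ 8) (hs : s ≠ 8) (hqs : q ≠ s) (hrs : r ≠ s) :
      onPair q s x = onPair r s x := by
    rcases eq_or_ne q r with rfl | hqr
    · rfl
    have := onPair_add_onPair_of_mulVec_eq_zero hx hqr hqs hq hrs hr hs
    rw [h8 r hr, h8 q hq] at this
    linarith
  have const {a b : Fin 9} (ha : a ≠ 8) (hb : b ≠ 8) (hab : a ≠ b) :
      onPair a b x = onPair 0 1 x := by
    obtain ⟨u, -, hu⟩ := exists_mem_notMem_of_card_lt_card (t := univ)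
      ((card_le_five (a := a) (b := b) (c := 0) (d := 1) (e := 8)).trans_lt (by simp))
    simp only [mem_insert, mem_singleton, not_or] at hu
    obtain ⟨-, hub, -, hu1, hu8⟩ := hu
    calc onPair a b x = onPair u b x := shift ha hu8 hb hab hub
      _ = onPair 1 u x := by
        rw [onPair_comm]; exact shift hb (by decide) hu8 (Ne.symm hub) (Ne.symm hu1)
      _ = onPair 0 1 x := by
        rw [onPair_comm]; exact shift hu8 (by decide) (by decide) hu1 (by decide)
  have h7 : 7 * onPair 0 1 x = 0 := by
    have row := (M_mulVec_triples Function.injective_id x).symm.trans (congrFun hx _)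
    simp only [id, Pi.zero_apply, h8 6 (by decide), h8 7 (by decide)] at row
    rw [const (a := 0) (b := 2), const (a := 1) (b := 2), const (a := 3) (b := 4),
      const (a := 3) (b := 5), const (a := 4) (b := 5), const (a := 6) (b := 7)] at row
    all_goals first | decide | linarith
  funext e
  obtain ⟨a, b, hab, he⟩ := card_eq_two.mp e.2
  rw [apply_eq_onPair (x := x) hab he, Pi.zero_apply]
  by_cases ha : a = 8
  · rw [onPair_comm, ha, h8 b (ha ▸ Ne.symm hab)]
  by_cases hb : b = 8
  · rw [hb, h8 a (hb ▸ hab)]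
  rw [const ha hb hab]
  linarith

theorem card_subtype_ne_eight : Fintype.card {v : Fin 9 // v ≠ 8} = 8 := by decide

theorem linearIndependent_incidence_sub :
    LinearIndependent ℝ fun v : {v : Fin 9 // v ≠ 8} => incidence v - incidence 8 := by
  rw [Fintype.linearIndependent_iff]
  intro g hg
  have hcoord (w : {v : Fin 9 // v ≠ 8}) : g w = ∑ u, g u := by
    have := congrArg (onPair w.1 8) hg
    simp [onPair_incidence w.2, Subtype.val_inj, Ne.symm w.2,
      fun u : {v : Fin 9 // v ≠ 8} => u.2, mul_sub, sum_sub_distrib] at this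
    linarith
  have hsum : ∑ u, g u = 0 := by
    have := Finset.sum_congr rfl fun w (_ : w ∈ univ) => hcoord w
    rw [sum_const, card_univ, card_subtype_ne_eight, nsmul_eq_mul, Nat.cast_ofNat] at this
    linarith
  exact fun w => (hcoord w).trans hsum

theorem finrank_ker_M : Module.finrank ℝ (LinearMap.ker M.mulVecLin) = 8 := by
  apply le_antisymm
  · let φ := (LinearMap.pi fun v : {v : Fin 9 // v ≠ 8} => onPair v.1 8) ∘ₗ
      (LinearMap.ker M.mulVecLin).subtype
    have hφ : Function.Injective φ := by
      rw [← LinearMap.ker_eq_bot, LinearMap.ker_eq_bot']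
      rintro ⟨x, hx⟩ h
      have h8 (v : Fin 9) (hv : v ≠ 8) : onPair v 8 x = 0 := congrFun h ⟨v, hv⟩
      simpa using eq_zero_of_mulVec_eq_zero_of_onPair_eight hx h8
    simpa [card_subtype_ne_eight] using LinearMap.finrank_le_finrank_of_injective hφ
  · have hspan : Submodule.span ℝ (Set.range fun v : {v : Fin 9 // v ≠ 8} =>
        incidence v - incidence 8) ≤ LinearMap.ker M.mulVecLin := by
      rw [Submodule.span_le]
      rintro _ ⟨v, rfl⟩
      simp [mulVec_sub, M_mulVec_incidence]
    simpa [finrank_span_eq_card linearIndependent_incidence_sub, card_subtype_ne_eight] using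
      Submodule.finrank_mono hspan

theorem card_pair9 : Fintype.card Pair9 = 36 := by
  rw [Fintype.card_finset_len, Fintype.card_fin]
  rfl

theorem rank_M : M.rank = 28 := by
  have := M.rank_add_finrank_ker
  rw [finrank_ker_M, card_pair9] at this
  omega
end

section
/- For every odd complete graph K_{2m+1} with m ≥ 1, the line graph L(K_{2m+1}) is a core: every graph homomorphism from L(K_{2m+1}) to itself is an automorphism. -/
/-! An endomorphism `φ` sends the star of a point `v` (the `2m` pairs through `v`, a clique) to a
clique of the same size `2m ≠ 3`; cliques of `L(K_n)` other than triangles lie in a star, so the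
image lies in the star of some point `σ v`. If `σ` is injective then `φ {p, q} = {σ p, σ q}`
and `φ` is injective. Otherwise `σ u = σ v` for some `u ≠ v` forces `σ` to be constant: if
`σ x ≠ σ u`, the adjacent pairs `{u, x}` and `{v, x}` would both go to `{σ u, σ x}`. Then `φ`
maps everything into a single star, a clique of size `2m`, which yields a proper
`2m`-edge-colouring of `K_{2m+1}`; but a colour class is a matching of at most `m` edges, and
`m (2m + 1) > 2m · m`. -/

/-- The line graph of the complete graph `K_n`: vertices are the 2-element
subsets of an `n`-set, adjacent when they intersect. -/
def lineK (n : ℕ) : SimpleGraph {e : Finset (Fin n) // e.card = 2} where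
  Adj e f := e ≠ f ∧ (e.1 ∩ f.1).Nonempty
  symm := by
    constructor
    intro a b h
    exact ⟨h.1.symm, by rw [Finset.inter_comm]; exact h.2⟩
  loopless := by
    constructor
    intro a h
    exact h.1 rfl

open Finset

theorem Finset.eq_pair_of_mem_of_card_eq_two {α : Type*} [DecidableEq α] {s : Finset α}
    (hs : #s = 2) {a b : α} (ha : a ∈ s) (hb : b ∈ s) (hab : a ≠ b) : s = {a, b} :=
  (eq_of_subset_of_card_le (insert_subset ha (singleton_subset_iff.2 hb))
    (by rw [hs, card_pair hab])).symm

theorem Finset.exists_eq_pair_of_mem_of_card_eq_two {α : Type*} [DecidableEq α] {s : Finset α}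
    (hs : #s = 2) {a : α} (ha : a ∈ s) : ∃ b, b ≠ a ∧ s = {a, b} := by
  obtain ⟨x, y, hxy, rfl⟩ := card_eq_two.1 hs
  rcases mem_insert.1 ha with rfl | h
  · exact ⟨y, hxy.symm, rfl⟩
  · obtain rfl := mem_singleton.1 h
    exact ⟨x, hxy, pair_comm x a⟩

theorem Finset.mem_of_inter_pair_nonempty {α : Type*} [DecidableEq α] {s : Finset α} {a b : α}
    (h : (s ∩ {a, b}).Nonempty) (ha : a ∉ s) : b ∈ s := by
  obtain ⟨x, hx⟩ := h
  simp only [mem_inter, mem_insert, mem_singleton] at hx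
  obtain ⟨hxs, rfl | rfl⟩ := hx
  · exact absurd hxs ha
  · exact hxs

namespace lineK

variable {N M : ℕ}

abbrev Pair (N : ℕ) := {e : Finset (Fin N) // #e = 2}

theorem card_filter_mem (v : Fin N) : #{e : Pair N | v ∈ e.1} = N - 1 := by
  have h : #((univ : Finset (Fin N)).erase v) = N - 1 := by
    rw [card_erase_of_mem (mem_univ v), card_fin]
  rw [← h]
  refine (card_bij (fun x hx => ⟨{v, x}, card_pair (ne_of_mem_erase hx).symm⟩) ?_ ?_ ?_).symm
  · intro x _
    simp
  · intro x hx y _ hxy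
    have hx' : x ∈ ({v, y} : Finset (Fin N)) := by
      rw [← Subtype.mk.inj hxy]
      exact mem_insert_of_mem (mem_singleton_self x)
    simpa [ne_of_mem_erase hx] using hx'
  · intro e he
    obtain ⟨x, hxv, hx⟩ := exists_eq_pair_of_mem_of_card_eq_two e.2 (mem_filter.1 he).2
    exact ⟨x, mem_erase.2 ⟨hxv, mem_univ x⟩, Subtype.ext hx.symm⟩

/-- The exceptional cliques, of size `3`, are the triangles `{pq, qr, rp}`. -/
theorem exists_forall_mem_of_isClique {s : Finset (Pair M)}
    (hs : (lineK M).IsClique (s : Set (Pair M))) (hne : s.Nonempty) (h3 : #s ≠ 3) :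
    ∃ w, ∀ g ∈ s, w ∈ g.1 := by
  obtain h1 | h2 | h4 : #s = 1 ∨ #s = 2 ∨ 3 < #s := by have := hne.card_pos; omega
  · obtain ⟨g, rfl⟩ := card_eq_one.1 h1
    obtain ⟨w, hw⟩ := card_pos.1 (by rw [g.2]; exact two_pos : 0 < #g.1)
    exact ⟨w, by simpa⟩
  · obtain ⟨g, h, hgh, rfl⟩ := card_eq_two.1 h2
    obtain ⟨w, hw⟩ := (hs (by simp) (by simp) hgh).2
    rw [mem_inter] at hw
    exact ⟨w, by simpa using hw⟩
  · obtain ⟨g₁, hg₁, g₂, hg₂, h12⟩ := one_lt_card.1 (by omega : 1 < #s)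
    obtain ⟨w, hw⟩ := (hs hg₁ hg₂ h12).2
    rw [mem_inter] at hw
    obtain ⟨p, -, hp⟩ := exists_eq_pair_of_mem_of_card_eq_two g₁.2 hw.1
    obtain ⟨q, -, hq⟩ := exists_eq_pair_of_mem_of_card_eq_two g₂.2 hw.2
    have hpq : p ≠ q := by rintro rfl; exact h12 (Subtype.ext (hp.trans hq.symm))
    have third_side : ∀ g ∈ s, w ∉ g.1 → g.1 = {p, q} := by
      intro g hg hwg
      have h1 := (hs hg hg₁ (by rintro rfl; exact hwg hw.1)).2
      have h2 := (hs hg hg₂ (by rintro rfl; exact hwg hw.2)).2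
      rw [hp] at h1
      rw [hq] at h2
      exact eq_pair_of_mem_of_card_eq_two g.2 (mem_of_inter_pair_nonempty h1 hwg)
        (mem_of_inter_pair_nonempty h2 hwg) hpq
    refine ⟨w, fun g hg => by_contra fun hwg => ?_⟩
    obtain ⟨h, hh, hh'⟩ := exists_mem_notMem_of_card_lt_card (s := {g₁, g₂, g})
      (card_le_three.trans_lt h4)
    simp only [mem_insert, mem_singleton, not_or] at hh'
    obtain ⟨hh1, hh2, hhg⟩ := hh'
    by_cases hwh : w ∈ h.1
    · obtain ⟨r, -, hr⟩ := exists_eq_pair_of_mem_of_card_eq_two h.2 hwh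
      have hgh := (hs hg hh (Ne.symm hhg)).2
      rw [hr] at hgh
      have hrg := mem_of_inter_pair_nonempty hgh hwg
      rw [third_side g hg hwg, mem_insert, mem_singleton] at hrg
      obtain rfl | rfl := hrg
      · exact hh1 (Subtype.ext (hr.trans hp.symm))
      · exact hh2 (Subtype.ext (hr.trans hq.symm))
    · exact hhg (Subtype.ext ((third_side h hh hwh).trans (third_side g hg hwg).symm))

theorem exists_forall_mem_map_of_mem (hN : 2 ≤ N) (hN4 : N ≠ 4) (φ : lineK N →g lineK M)
    (v : Fin N) : ∃ w, ∀ e : Pair N, v ∈ e.1 → w ∈ (φ e).1 := by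
  set star : Finset (Pair N) := {e | v ∈ e.1}
  have hadj : ∀ e ∈ star, ∀ f ∈ star, e ≠ f → (lineK M).Adj (φ e) (φ f) :=
    fun e he f hf hef =>
      φ.map_adj ⟨hef, v, mem_inter.2 ⟨(mem_filter.1 he).2, (mem_filter.1 hf).2⟩⟩
  have hinj : Set.InjOn φ star := fun e he f hf hφ =>
    by_contra fun hef => (hadj e he f hf hef).1 hφ
  have hcard : #(star.image φ) = N - 1 := by rw [card_image_of_injOn hinj, card_filter_mem]
  have hclique : (lineK M).IsClique (star.image φ : Set (Pair M)) := by
    rintro _ hg _ hh hgh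
    obtain ⟨e, he, rfl⟩ := mem_image.1 hg
    obtain ⟨f, hf, rfl⟩ := mem_image.1 hh
    exact hadj e he f hf (fun hef => hgh (congrArg φ hef))
  obtain ⟨w, hw⟩ := exists_forall_mem_of_isClique hclique
    (card_pos.1 (by omega)) (by omega)
  exact ⟨w, fun e he => hw _ (mem_image_of_mem φ (mem_filter.2 ⟨mem_univ e, he⟩))⟩

theorem map_val_eq_image (φ : lineK N →g lineK M) {σ : Fin N → Fin M}
    (hσ : ∀ v (e : Pair N), v ∈ e.1 → σ v ∈ (φ e).1) (hσinj : Function.Injective σ)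
    (e : Pair N) : (φ e).1 = e.1.image σ := by
  refine (eq_of_subset_of_card_le (fun x hx => ?_) ?_).symm
  · obtain ⟨v, hv, rfl⟩ := mem_image.1 hx
    exact hσ v e hv
  · rw [(φ e).2, card_image_of_injective _ hσinj, e.2]

theorem apply_eq_of_apply_eq_of_ne (φ : lineK N →g lineK M) {σ : Fin N → Fin M}
    (hσ : ∀ v (e : Pair N), v ∈ e.1 → σ v ∈ (φ e).1) {u v : Fin N} (huv : u ≠ v)
    (h : σ u = σ v) (x : Fin N) : σ x = σ u := by
  by_cases hxu : x = u
  · rw [hxu]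
  by_cases hxv : x = v
  · rw [hxv, h]
  by_contra hx
  let eu : Pair N := ⟨{u, x}, card_pair (Ne.symm hxu)⟩
  let ev : Pair N := ⟨{v, x}, card_pair (Ne.symm hxv)⟩
  have hu : (φ eu).1 = {σ u, σ x} := eq_pair_of_mem_of_card_eq_two (φ eu).2
    (hσ u eu (by simp [eu])) (hσ x eu (by simp [eu])) (Ne.symm hx)
  have hv : (φ ev).1 = {σ u, σ x} := eq_pair_of_mem_of_card_eq_two (φ ev).2
    (h ▸ hσ v ev (by simp [ev])) (hσ x ev (by simp [ev])) (Ne.symm hx)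
  have heuv : eu ≠ ev := fun heq => by
    have : u ∈ ({v, x} : Finset (Fin N)) := by
      rw [← Subtype.mk.inj heq]
      exact mem_insert_self u _
    simp_all
  exact (φ.map_adj (⟨heuv, x, by simp [eu, ev]⟩ : (lineK N).Adj eu ev)).1
    (Subtype.ext (hu.trans hv.symm))

theorem card_le_of_isIndepSet {s : Finset (Pair N)}
    (hs : (lineK N).IsIndepSet (s : Set (Pair N))) : #s ≤ N / 2 := by
  have hdisj : (s : Set (Pair N)).PairwiseDisjoint Subtype.val := fun e he f hf hef =>
    disjoint_iff_inter_eq_empty.2 (not_nonempty_iff_eq_empty.1 fun h => hs he hf hef ⟨hef, h⟩)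
  have hunion : #(s.biUnion Subtype.val) = 2 * #s := by
    rw [card_biUnion hdisj, sum_congr rfl fun e _ => e.2, sum_const, smul_eq_mul, mul_comm]
  have hle : #(s.biUnion Subtype.val) ≤ N := (card_le_univ _).trans_eq (Fintype.card_fin N)
  omega

theorem choose_two_le_mul_of_colorable {k : ℕ} (h : (lineK N).Colorable k) :
    N.choose 2 ≤ k * (N / 2) := by
  obtain ⟨C⟩ := h
  calc N.choose 2 = #(univ : Finset (Pair N)) := by
        rw [card_univ, Fintype.card_finset_len, Fintype.card_fin]
    _ = ∑ c : Fin k, #{e : Pair N | C e = c} :=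
        card_eq_sum_card_fiberwise fun e _ => mem_univ (C e)
    _ ≤ k * (N / 2) := by
        refine (sum_le_card_nsmul _ _ _ fun c _ => card_le_of_isIndepSet ?_).trans_eq (by simp)
        simpa [Set.ext_iff, SimpleGraph.Coloring.colorClass] using C.isIndepSet_colorClass c

theorem not_colorable_two_mul {m : ℕ} (hm : 1 ≤ m) :
    ¬ (lineK (2 * m + 1)).Colorable (2 * m) := by
  intro h
  have hbound := choose_two_le_mul_of_colorable h
  rw [Nat.choose_two_right, show (2 * m + 1) * (2 * m + 1 - 1) = 2 * (m * (2 * m + 1)) by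
    rw [Nat.add_sub_cancel]; ring, Nat.mul_div_cancel_left _ two_pos,
    show (2 * m + 1) / 2 = m by omega] at hbound
  nlinarith

theorem colorable_of_forall_mem_map (φ : lineK N →g lineK M) {w : Fin M}
    (hw : ∀ e, w ∈ (φ e).1) : (lineK N).Colorable (M - 1) := by
  let C : (lineK N).Coloring {g : Pair M // w ∈ g.1} :=
    SimpleGraph.Coloring.mk (fun e => ⟨φ e, hw e⟩) fun h heq =>
      (φ.map_adj h).1 (congrArg Subtype.val heq)
  simpa [Fintype.card_subtype, card_filter_mem] using C.colorable

end lineK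

/-- `L(K_{2m+1})` is a core: every endomorphism is an automorphism. -/
theorem lineK_odd_is_core (m : ℕ) (hm : 1 ≤ m)
    (φ : lineK (2 * m + 1) →g lineK (2 * m + 1)) :
    Function.Bijective φ := by
  rw [← Finite.injective_iff_bijective]
  choose σ hσ using lineK.exists_forall_mem_map_of_mem (by omega) (by omega) φ
  by_cases hinj : Function.Injective σ
  · intro e f hef
    refine Subtype.ext (image_injective hinj ?_)
    rw [← lineK.map_val_eq_image φ hσ hinj, ← lineK.map_val_eq_image φ hσ hinj, hef]
  · obtain ⟨u, v, huv, hne⟩ := Function.not_injective_iff.1 hinj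
    refine absurd (lineK.colorable_of_forall_mem_map φ (w := σ u) fun e => ?_)
      (lineK.not_colorable_two_mul hm)
    obtain ⟨p, hp⟩ := card_pos.1 (by rw [e.2]; exact two_pos : 0 < #e.1)
    exact lineK.apply_eq_of_apply_eq_of_ne φ hσ hne huv p ▸ hσ p e hp
end

section
/- The core of L(K_{2m}) is the complete graph K_{2m−1}; equivalently, the edge set of K_{2m} can be partitioned into 2m−1 perfect matchings, yielding a proper (2m−1)-colouring of L(K_{2m}), and L(K_{2m}) contains a clique of size 2m−1. -/
open SimpleGraph Finset

theorem Finset.exists_ne_eq_pair_of_card_eq_two {α : Type*} [DecidableEq α] {s : Finset α}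
    (hs : s.card = 2) {v : α} (hv : v ∈ s) : ∃ a, a ≠ v ∧ s = {v, a} := by
  obtain ⟨x, y, hxy, rfl⟩ := card_eq_two.mp hs
  rcases mem_insert.mp hv with rfl | hv
  · exact ⟨y, hxy.symm, rfl⟩
  · rw [mem_singleton.mp hv]
    exact ⟨x, hxy, pair_comm x y⟩

namespace lineK

def homOfInjOn {N : ℕ} {α : Type*} (c : Finset (Fin N) → α)
    (hc : ∀ v, Set.InjOn (fun a => c {v, a}) {v}ᶜ) : lineK N →g completeGraph α where
  toFun e := c e
  map_rel' := by
    rintro ⟨e, he⟩ ⟨f, hf⟩ ⟨hef, v, hv⟩ hcol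
    obtain ⟨a, hav, rfl⟩ := exists_ne_eq_pair_of_card_eq_two he (mem_inter.mp hv).1
    obtain ⟨b, hbv, rfl⟩ := exists_ne_eq_pair_of_card_eq_two hf (mem_inter.mp hv).2
    obtain rfl := hc v hav hbv hcol
    exact hef rfl

def starEmbedding (n : ℕ) : completeGraph (Fin n) ↪g lineK (n + 1) :=
  let star : completeGraph (Fin n) →g lineK (n + 1) :=
    { toFun i := ⟨{i.castSucc, Fin.last n}, card_pair (Fin.castSucc_lt_last i).ne⟩
      map_rel' {i j} hij := by
        refine ⟨fun h => hij ?_, Fin.last n, by simp⟩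
        simpa [(Fin.castSucc_lt_last _).ne] using congrArg (i.castSucc ∈ ·.1) h }
  (star.toCopy star.injective_of_top_hom).topEmbedding

end lineK

/-- The last vertex contributes `n = 0` to the sum, so `{a, last}` gets the colour `2 a`. -/
def roundRobinColor (n : ℕ) (e : Finset (Fin (n + 1))) : ZMod n :=
  (if Fin.last n ∈ e then 2 else 1) * ∑ u ∈ e, ((u : ℕ) : ZMod n)

section RoundRobin

variable {n : ℕ}

theorem roundRobinColor_last_castSucc (i : Fin n) :
    roundRobinColor n {Fin.last n, i.castSucc} = 2 * ((i : ℕ) : ZMod n) := by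
  simp [roundRobinColor, sum_pair (Fin.castSucc_lt_last i).ne']

theorem roundRobinColor_castSucc_last (i : Fin n) :
    roundRobinColor n {i.castSucc, Fin.last n} = 2 * ((i : ℕ) : ZMod n) := by
  rw [pair_comm, roundRobinColor_last_castSucc]

theorem roundRobinColor_castSucc_castSucc {i j : Fin n} (hij : i ≠ j) :
    roundRobinColor n {i.castSucc, j.castSucc} = ((i : ℕ) : ZMod n) + ((j : ℕ) : ZMod n) := by
  simp [roundRobinColor, sum_pair (Fin.castSucc_injective n |>.ne hij),
    (Fin.castSucc_lt_last _).ne']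

theorem Fin.natCast_val_injective : Function.Injective fun i : Fin n => ((i : ℕ) : ZMod n) :=
  fun i j hij => Fin.ext <| by
    rw [← ZMod.val_cast_of_lt i.isLt, ← ZMod.val_cast_of_lt j.isLt]
    exact congrArg ZMod.val hij

theorem roundRobinColor_injOn (hn : Odd n) (v : Fin (n + 1)) :
    Set.InjOn (fun a => roundRobinColor n {v, a}) {v}ᶜ := by
  have two_mul_cancel : ∀ x y : ZMod n, 2 * x = 2 * y → x = y :=
    fun x y => ((ZMod.isUnit_iff_coprime 2 n).mpr (Nat.coprime_two_left.mpr hn)).mul_left_cancel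
  intro a ha b hb hab
  simp only [Set.mem_compl_singleton_iff] at ha hb
  induction v using Fin.lastCases with
  | last =>
    induction a using Fin.lastCases with
    | last => exact absurd rfl ha
    | cast i =>
      induction b using Fin.lastCases with
      | last => exact absurd rfl hb
      | cast j =>
        simp only [roundRobinColor_last_castSucc] at hab
        rw [Fin.natCast_val_injective (two_mul_cancel _ _ hab)]
  | cast k =>
    have hk : ∀ {i : Fin n}, i.castSucc ≠ k.castSucc → i ≠ k := ne_of_apply_ne Fin.castSucc
    induction a using Fin.lastCases with
    | last =>
      induction b using Fin.lastCases with
      | last => rfl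
      | cast j =>
        simp only [roundRobinColor_castSucc_last, roundRobinColor_castSucc_castSucc (hk hb).symm]
          at hab
        exact absurd (Fin.natCast_val_injective (by linear_combination hab)).symm (hk hb)
    | cast i =>
      induction b using Fin.lastCases with
      | last =>
        simp only [roundRobinColor_castSucc_last, roundRobinColor_castSucc_castSucc (hk ha).symm]
          at hab
        exact absurd (Fin.natCast_val_injective (by linear_combination hab)) (hk ha)
      | cast j =>
        simp only [roundRobinColor_castSucc_castSucc (hk ha).symm,
          roundRobinColor_castSucc_castSucc (hk hb).symm] at hab
        rw [Fin.natCast_val_injective (add_left_cancel hab)]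

end RoundRobin

/-- The core of `L(K_{2m})` is `K_{2m-1}`: there is a homomorphism from
`L(K_{2m})` to the complete graph on `2m − 1` vertices (a proper
`(2m−1)`-colouring, coming from a 1-factorization of `K_{2m}`), and `K_{2m-1}`
embeds into `L(K_{2m})` as a clique. -/
theorem core_lineK_even (m : ℕ) (hm : 1 ≤ m) :
    Nonempty (lineK (2 * m) →g SimpleGraph.completeGraph (Fin (2 * m - 1))) ∧
    Nonempty (SimpleGraph.completeGraph (Fin (2 * m - 1)) ↪g lineK (2 * m)) := by
  obtain ⟨n, hmn⟩ : ∃ n, 2 * m = n + 1 := ⟨2 * m - 1, by omega⟩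
  have hn : Odd n := ⟨m - 1, by omega⟩
  have : NeZero n := ⟨hn.pos.ne'⟩
  rw [hmn, Nat.add_sub_cancel]
  exact ⟨⟨(Iso.completeGraph (ZMod.finEquiv n).symm.toEquiv).toHom.comp
      (lineK.homOfInjOn _ (roundRobinColor_injOn hn))⟩, ⟨lineK.starEmbedding n⟩⟩
end

section
/- Let D be a 3-(22,6,1) design and let α be a block of D. Then the 16 blocks of D disjoint from α form a 2-(16,6,2) design on the 16 points outside α. -/
/-- `D` is (the block set of) a 3-(22,6,1) design on `Fin 22`: every block has
six points and every 3-subset of points lies in exactly one block. -/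
def IsWittDesign (D : Finset (Finset (Fin 22))) : Prop :=
  (∀ β ∈ D, β.card = 6) ∧
  (∀ t : Finset (Fin 22), t.card = 3 → (D.filter fun β => t ⊆ β).card = 1)

/-!
Through two points pass `(22 - 2) / (6 - 2) = 5` blocks. Two blocks cannot meet in a single
point `a`: the five blocks through `a` and a point `p ∈ β \ α` would have to cover the five
points of `α \ {a}`, each block other than `β` covering at most one of them. Hence blocks meet
`α` in 0 or 2 points, so for `x, y ∉ α` the six points of `α` are spread two at a time over
three of the five blocks through `x, y`, leaving two disjoint from `α`. Counting incident pairs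
then gives `15 N = 2 · (16 choose 2)` disjoint blocks, i.e. `N = 16`.
-/

open Finset

/-- A 3-`(|V|, k, 1)` design, i.e. a Steiner system `S(3, k, |V|)`. -/
def IsSteinerSystem3 {V : Type*} [DecidableEq V] (k : ℕ) (D : Finset (Finset V)) : Prop :=
  (∀ β ∈ D, #β = k) ∧ ∀ t : Finset V, #t = 3 → #{β ∈ D | t ⊆ β} = 1

namespace IsSteinerSystem3

variable {V : Type*} [DecidableEq V] {k : ℕ} {D : Finset (Finset V)} {α β : Finset V} {x y : V}

theorem eq_of_three_subset (hD : IsSteinerSystem3 k D) (hα : α ∈ D) (hβ : β ∈ D)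
    {t : Finset V} (ht : #t = 3) (htα : t ⊆ α) (htβ : t ⊆ β) : α = β :=
  card_le_one.mp (hD.2 t ht).le α (mem_filter.mpr ⟨hα, htα⟩) β (mem_filter.mpr ⟨hβ, htβ⟩)

theorem card_inter_le_two (hD : IsSteinerSystem3 k D) (hα : α ∈ D) (hβ : β ∈ D)
    (hne : α ≠ β) : #(α ∩ β) ≤ 2 := by
  by_contra! h
  obtain ⟨t, hts, htc⟩ := exists_subset_card_eq (s := α ∩ β) (n := 3) h
  exact hne <| hD.eq_of_three_subset hα hβ htc (hts.trans inter_subset_left)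
    (hts.trans inter_subset_right)

theorem card_blocks_through_triple (hD : IsSteinerSystem3 k D) {z : V}
    (hxy : x ≠ y) (hxz : x ≠ z) (hyz : y ≠ z) :
    #{β ∈ D | x ∈ β ∧ y ∈ β ∧ z ∈ β} = 1 := by
  simpa only [insert_subset_iff, singleton_subset_iff] using
    hD.2 {x, y, z} (card_eq_three.mpr ⟨x, y, z, hxy, hxz, hyz, rfl⟩)

theorem card_blocks_through_pair_mul [Fintype V] (hD : IsSteinerSystem3 k D) (hxy : x ≠ y) :
    #{β ∈ D | x ∈ β ∧ y ∈ β} * (k - 2) = Fintype.card V - 2 := by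
  have h := card_mul_eq_card_mul (fun a β => a ∈ β) (s := univ \ {x, y})
    (t := {β ∈ D | x ∈ β ∧ y ∈ β}) (m := 1) (n := k - 2) ?_ ?_
  · rwa [card_univ_sdiff, card_pair hxy, mul_one, eq_comm] at h
  · intro a ha
    simp only [mem_sdiff, mem_univ, mem_insert, mem_singleton, true_and, not_or] at ha
    rw [bipartiteAbove, filter_filter]
    simpa only [and_assoc] using
      hD.card_blocks_through_triple hxy (Ne.symm ha.1) (Ne.symm ha.2)
  · intro β hβ
    rw [mem_filter] at hβ
    have : (univ \ {x, y}).bipartiteBelow (fun a β => a ∈ β) β = β \ {x, y} := by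
      ext a; simp [bipartiteBelow, and_comm]
    rw [this, card_sdiff_of_subset (by simp [insert_subset_iff, hβ.2]), card_pair hxy,
      hD.1 β hβ.1]

theorem card_inter_ne_one (hD : IsSteinerSystem3 k D)
    (hr : ∀ x y : V, x ≠ y → #{β ∈ D | x ∈ β ∧ y ∈ β} < k)
    (hα : α ∈ D) (hβ : β ∈ D) (hne : α ≠ β) : #(α ∩ β) ≠ 1 := by
  intro h1
  obtain ⟨a, ha⟩ := card_eq_one.mp h1
  have haαβ : a ∈ α ∩ β := ha ▸ mem_singleton_self a
  rw [mem_inter] at haαβ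
  obtain ⟨p, hpβ, hpα⟩ : ∃ p ∈ β, p ∉ α := not_subset.mp fun hsub =>
    hne (eq_of_subset_of_card_le hsub (by rw [hD.1 β hβ, hD.1 α hα])).symm
  have hap : a ≠ p := fun h => hpα (h ▸ haαβ.1)
  have hle := card_le_card_of_forall_subsingleton (fun q γ => q ∈ γ) (s := α.erase a)
    (t := {γ ∈ D | a ∈ γ ∧ p ∈ γ}.erase β) ?_ ?_
  · have hβT : β ∈ {γ ∈ D | a ∈ γ ∧ p ∈ γ} := mem_filter.mpr ⟨hβ, haαβ.2, hpβ⟩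
    rw [card_erase_of_mem haαβ.1, hD.1 α hα, card_erase_of_mem hβT] at hle
    have := hr a p hap
    have := card_pos.mpr ⟨β, hβT⟩
    omega
  · intro q hq
    rw [mem_erase] at hq
    have hqβ : q ∉ β := fun h =>
      hq.1 (mem_singleton.mp (ha ▸ mem_inter.mpr ⟨hq.2, h⟩))
    obtain ⟨γ, hγ⟩ := card_pos.mp <| by
      rw [hD.card_blocks_through_triple hap (Ne.symm hq.1) fun h => hpα (h ▸ hq.2)]
      exact Nat.one_pos
    rw [mem_filter] at hγ
    exact ⟨γ, mem_erase.mpr ⟨fun h => hqβ (h ▸ hγ.2.2.2),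
      mem_filter.mpr ⟨hγ.1, hγ.2.1, hγ.2.2.1⟩⟩, hγ.2.2.2⟩
  · intro γ hγ q hq q' hq'
    simp only [mem_erase, mem_filter, Set.mem_ofPred_eq] at hγ hq hq'
    by_contra hqq'
    have hsub : {a, q, q'} ⊆ α ∩ γ := by
      simp [insert_subset_iff, haαβ.1, hq.1.2, hq'.1.2, hγ.2.2.1, hq.2, hq'.2]
    have h3 : #{a, q, q'} = 3 := card_eq_three.mpr ⟨a, q, q', Ne.symm hq.1.1, Ne.symm hq'.1.1,
      hqq', rfl⟩
    have := hD.card_inter_le_two hα hγ.2.1 fun h => hpα (h ▸ hγ.2.2.2)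
    have := card_le_card hsub
    omega

theorem card_inter_eq_zero_or_two (hD : IsSteinerSystem3 k D)
    (hr : ∀ x y : V, x ≠ y → #{β ∈ D | x ∈ β ∧ y ∈ β} < k)
    (hα : α ∈ D) (hβ : β ∈ D) (hne : α ≠ β) : #(α ∩ β) = 0 ∨ #(α ∩ β) = 2 := by
  have := hD.card_inter_le_two hα hβ hne
  have := hD.card_inter_ne_one hr hα hβ hne
  omega

theorem card_disjoint_blocks_through_pair (hD : IsSteinerSystem3 k D)
    (hr : ∀ x y : V, x ≠ y → #{β ∈ D | x ∈ β ∧ y ∈ β} < k)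
    (hα : α ∈ D) (hx : x ∉ α) (hy : y ∉ α) (hxy : x ≠ y) :
    2 * #{β ∈ {β ∈ D | Disjoint α β} | x ∈ β ∧ y ∈ β} + k
      = 2 * #{β ∈ D | x ∈ β ∧ y ∈ β} := by
  set T := {β ∈ D | x ∈ β ∧ y ∈ β}
  have hmeet := card_mul_eq_card_mul (fun a β => a ∈ β) (s := α)
    (t := {β ∈ T | ¬Disjoint α β}) (m := 1) (n := 2) ?_ ?_
  · have hsplit := card_filter_add_card_filter_not (s := T) (p := fun β => Disjoint α β)
    have hT : {β ∈ {β ∈ D | Disjoint α β} | x ∈ β ∧ y ∈ β} = {β ∈ T | Disjoint α β} := by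
      ext β; simp only [T, mem_filter]; tauto
    rw [hD.1 α hα] at hmeet
    rw [hT]
    omega
  · intro a ha
    have hax : x ≠ a := fun h => hx (h ▸ ha)
    have hay : y ≠ a := fun h => hy (h ▸ ha)
    rw [← hD.card_blocks_through_triple hxy hax hay, bipartiteAbove]
    congr 1
    ext β
    simp only [T, mem_filter, not_disjoint_iff]
    exact ⟨fun h => ⟨h.1.1.1, h.1.1.2.1, h.1.1.2.2, h.2⟩,
      fun h => ⟨⟨⟨h.1, h.2.1, h.2.2.1⟩, a, ha, h.2.2.2⟩, h.2.2.2⟩⟩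
  · intro β hβ
    simp only [T, mem_filter] at hβ
    rw [bipartiteBelow, filter_mem_eq_inter]
    have hne : α ≠ β := fun h => hx (h ▸ hβ.1.2.1)
    have hnz : #(α ∩ β) ≠ 0 := by
      rw [Ne, card_eq_zero, ← disjoint_iff_inter_eq_empty]; exact hβ.2
    have := hD.card_inter_eq_zero_or_two hr hα hβ.1.1 hne
    omega

theorem card_disjoint_blocks_mul [Fintype V] (hD : IsSteinerSystem3 k D) (hα : α ∈ D) {d : ℕ}
    (hd : ∀ x ∉ α, ∀ y ∉ α, x ≠ y → #{β ∈ {β ∈ D | Disjoint α β} | x ∈ β ∧ y ∈ β} = d) :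
    #{β ∈ D | Disjoint α β} * k.choose 2 = (Fintype.card V - k).choose 2 * d := by
  have h := card_mul_eq_card_mul (fun p β => p ⊆ β) (s := powersetCard 2 (univ \ α))
    (t := {β ∈ D | Disjoint α β}) (m := d) (n := k.choose 2) ?_ ?_
  · rwa [card_powersetCard, card_univ_sdiff, hD.1 α hα, eq_comm] at h
  · intro p hp
    rw [mem_powersetCard] at hp
    obtain ⟨x, y, hxy, rfl⟩ := card_eq_two.mp hp.2
    have hxy' : x ∉ α ∧ y ∉ α := by simpa [insert_subset_iff] using hp.1
    rw [← hd x hxy'.1 y hxy'.2 hxy, bipartiteAbove]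
    simp only [insert_subset_iff, singleton_subset_iff]
  · intro β hβ
    rw [mem_filter] at hβ
    have : (powersetCard 2 (univ \ α)).bipartiteBelow (fun p β => p ⊆ β) β
        = powersetCard 2 β := by
      ext p
      simp only [bipartiteBelow, mem_filter, mem_powersetCard]
      exact ⟨fun h => ⟨h.2, h.1.2⟩,
        fun h => ⟨⟨h.1.trans (subset_sdiff.mpr ⟨subset_univ β, hβ.2.symm⟩), h.2⟩, h.1⟩⟩
    rw [this, card_powersetCard, hD.1 β hβ.1]

end IsSteinerSystem3

/-- The 16 blocks of a 3-(22,6,1) design disjoint from a fixed block `α` form a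
2-(16,6,2) design on the 16 points outside `α`. -/
theorem blocks_disjoint_from_block_form_2_design
    (D : Finset (Finset (Fin 22))) (hD : IsWittDesign D)
    (α : Finset (Fin 22)) (hα : α ∈ D) :
    (Finset.univ \ α).card = 16 ∧
    (D.filter fun β => Disjoint α β).card = 16 ∧
    (∀ β ∈ D.filter fun β => Disjoint α β, β ⊆ Finset.univ \ α ∧ β.card = 6) ∧
    (∀ x ∈ Finset.univ \ α, ∀ y ∈ Finset.univ \ α, x ≠ y →
      ((D.filter fun β => Disjoint α β).filter fun β => x ∈ β ∧ y ∈ β).card = 2) := by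
  have hS : IsSteinerSystem3 6 D := hD
  have hr : ∀ x y : Fin 22, x ≠ y → #{β ∈ D | x ∈ β ∧ y ∈ β} = 5 := fun x y hxy => by
    have := hS.card_blocks_through_pair_mul hxy
    simp only [Fintype.card_fin] at this
    omega
  have hd : ∀ x ∉ α, ∀ y ∉ α, x ≠ y → #{β ∈ {β ∈ D | Disjoint α β} | x ∈ β ∧ y ∈ β} = 2 :=
    fun x hx y hy hxy => by
      have := hS.card_disjoint_blocks_through_pair (fun x y h => (hr x y h).trans_lt (by norm_num))
        hα hx hy hxy
      rw [hr x y hxy] at this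
      omega
  refine ⟨by rw [card_univ_sdiff, hD.1 α hα, Fintype.card_fin], ?_, ?_, ?_⟩
  · have := hS.card_disjoint_blocks_mul hα hd
    simp only [Fintype.card_fin] at this
    norm_num [Nat.choose_two_right] at this
    omega
  · intro β hβ
    rw [mem_filter] at hβ
    exact ⟨subset_sdiff.mpr ⟨subset_univ β, hβ.2.symm⟩, hD.1 β hβ.1⟩
  · intro x hx y hy hxy
    exact hd x (mem_sdiff.mp hx).2 y (mem_sdiff.mp hy).2 hxy
end

section
/- In the Witt graph W on the 77 blocks of the 3-(22,6,1) design (blocks adjacent iff disjoint), the maximum size of an independent set is 21, and every independent set of size 21 consists of the 21 blocks through some fixed point of the design. -/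
/-!
Two intersecting blocks meet in exactly two points: if `B ∩ C = {a}` and `c ∈ C \ B`, the five
points of `B \ {a}` would lie in five distinct blocks through `a` and `c` other than `C`, of which
there are only four. So it suffices to show that at least 21 six-subsets of a 22-set pairwise
meeting in two points share a point. Averaging gives a point `x` of degree `n ≥ 6`; suppose some
member avoids `x`, and let `m` be the number of such members. The members through `x` meet a member avoiding `x` in
distinct pairs, so `n ≤ 15`. On the other 21 points, Cauchy–Schwarz for the degree functions of
the two subfamilies gives `(n - 4)(m - 2) ≤ 16`, which contradicts `n + m ≥ 21`.
-/

open Finset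

section DoubleCounting

variable {α : Type*} [DecidableEq α]

lemma sum_card_filter_mem_eq_sum_card_inter (s : Finset α) (F : Finset (Finset α)) :
    ∑ a ∈ s, #{b ∈ F | a ∈ b} = ∑ b ∈ F, #(s ∩ b) := by
  simp_rw [← filter_mem_eq_inter, card_eq_sum_ones, sum_filter]
  exact sum_comm

lemma sum_card_filter_mem_mul_card_filter_mem (s : Finset α) (F G : Finset (Finset α)) :
    ∑ a ∈ s, #{b ∈ F | a ∈ b} * #{c ∈ G | a ∈ c} = ∑ b ∈ F, ∑ c ∈ G, #(s ∩ b ∩ c) := by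
  simp_rw [← filter_mem_eq_inter, filter_filter, card_eq_sum_ones, sum_filter, sum_mul_sum]
  rw [sum_comm]
  refine sum_congr rfl fun b _ => ?_
  rw [sum_comm]
  refine sum_congr rfl fun c _ => sum_congr rfl fun a _ => ?_
  split_ifs <;> simp_all

lemma sum_card_filter_mem_sq_add_card_mul {s : Finset α} {F : Finset (Finset α)} {d e : ℕ}
    (hd : ∀ b ∈ F, #(s ∩ b) = d) (he : ∀ b ∈ F, ∀ c ∈ F, b ≠ c → #(s ∩ b ∩ c) = e) :
    ∑ a ∈ s, #{b ∈ F | a ∈ b} ^ 2 + #F * e = #F * d + #F * #F * e := by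
  have hrow : ∀ b ∈ F, ∑ c ∈ F, #(s ∩ b ∩ c) + e = d + #F * e := fun b hb => by
    rw [← add_sum_erase _ _ hb, inter_assoc, inter_self, hd b hb,
      sum_congr rfl fun c hc => he b hb c (mem_of_mem_erase hc) (ne_of_mem_erase hc).symm,
      sum_const, smul_eq_mul, ← card_erase_add_one hb]
    ring
  calc ∑ a ∈ s, #{b ∈ F | a ∈ b} ^ 2 + #F * e
      = ∑ b ∈ F, (∑ c ∈ F, #(s ∩ b ∩ c) + e) := by
        simp_rw [sq, sum_card_filter_mem_mul_card_filter_mem, sum_add_distrib, sum_const,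
          smul_eq_mul]
    _ = #F * d + #F * #F * e := by
        rw [sum_congr rfl hrow, sum_const, smul_eq_mul]
        ring

end DoubleCounting

section Designs

variable {α : Type*} [DecidableEq α] {D : Finset (Finset α)}

lemma card_filter_subset_mul_sub [Fintype α] {k μ : ℕ} (hk : ∀ β ∈ D, #β = k)
    (T : Finset α) (hT : ∀ y ∉ T, #{β ∈ D | insert y T ⊆ β} = μ) :
    #{β ∈ D | T ⊆ β} * (k - #T) = (Fintype.card α - #T) * μ := by
  calc #{β ∈ D | T ⊆ β} * (k - #T) = ∑ β ∈ D with T ⊆ β, #(Tᶜ ∩ β) := by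
        rw [sum_congr rfl fun β hβ => ?_, sum_const, smul_eq_mul]
        rw [mem_filter] at hβ
        rw [inter_comm, ← sdiff_eq_inter_compl, card_sdiff_of_subset hβ.2, hk β hβ.1]
    _ = ∑ y ∈ Tᶜ, #{β ∈ {β ∈ D | T ⊆ β} | y ∈ β} :=
        (sum_card_filter_mem_eq_sum_card_inter _ _).symm
    _ = (Fintype.card α - #T) * μ := by
        rw [sum_congr rfl fun y hy => ?_, sum_const, smul_eq_mul, card_compl]
        rw [filter_filter]
        simpa [insert_subset_iff, and_comm] using hT y (mem_compl.1 hy)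

lemma card_inter_lt_of_card_filter_subset_le_one {t : ℕ}
    (hD : ∀ T : Finset α, #T = t → #{β ∈ D | T ⊆ β} ≤ 1)
    {B C : Finset α} (hB : B ∈ D) (hC : C ∈ D) (hBC : B ≠ C) : #(B ∩ C) < t := by
  by_contra! h
  obtain ⟨T, hTBC, hT⟩ := exists_subset_card_eq h
  have hpair : {B, C} ⊆ {β ∈ D | T ⊆ β} := by
    simp only [insert_subset_iff, singleton_subset_iff, mem_filter]
    exact ⟨⟨hB, hTBC.trans inter_subset_left⟩, hC, hTBC.trans inter_subset_right⟩
  have := (card_le_card hpair).trans (hD T hT)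
  rw [card_pair hBC] at this
  omega

end Designs

section EquiIntersecting

variable {α : Type*} [DecidableEq α] {S : Finset (Finset α)}

lemma card_filter_mem_le_choose (h2 : ∀ B ∈ S, ∀ C ∈ S, B ≠ C → #(B ∩ C) = 2)
    {E : Finset α} (hE : E ∈ S) {x : α} (hxE : x ∉ E) :
    #{B ∈ S | x ∈ B} ≤ (#E).choose 2 := by
  rw [← card_powersetCard]
  refine card_le_card_of_injOn (· ∩ E) (fun B hB => ?_) fun B₁ hB₁ B₂ hB₂ hEq => ?_
  · rw [coe_filter, Set.mem_ofPred_eq] at hB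
    have hBE : B ≠ E := by rintro rfl; exact hxE hB.2
    exact mem_coe.2 <| mem_powersetCard.2 ⟨inter_subset_right, h2 B hB.1 E hE hBE⟩
  · by_contra hne
    rw [coe_filter, Set.mem_ofPred_eq] at hB₁ hB₂
    have hB₁E : B₁ ≠ E := by rintro rfl; exact hxE hB₁.2
    have hsub : insert x (B₁ ∩ E) ⊆ B₁ ∩ B₂ := by
      refine insert_subset (mem_inter.2 ⟨hB₁.2, hB₂.2⟩) ?_
      have : B₁ ∩ E ⊆ B₂ := (le_of_eq hEq).trans inter_subset_left
      exact subset_inter inter_subset_left this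
    have := card_le_card hsub
    rw [card_insert_of_notMem fun h => hxE (mem_inter.1 h).2, h2 B₁ hB₁.1 E hE hB₁E,
      h2 B₁ hB₁.1 B₂ hB₂.1 hne] at this
    omega

lemma exists_mul_le_card_mul_card_filter_mem [Fintype α] [Nonempty α] {k : ℕ}
    (hk : ∀ B ∈ S, #B = k) : ∃ x, #S * k ≤ Fintype.card α * #{B ∈ S | x ∈ B} := by
  obtain ⟨x, -, hx⟩ := exists_le_of_sum_le univ_nonempty <| show
      ∑ _x : α, #S * k ≤ ∑ x, Fintype.card α * #{B ∈ S | x ∈ B} by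
    rw [sum_const, card_univ, smul_eq_mul, ← mul_sum, sum_card_filter_mem_eq_sum_card_inter,
      sum_congr rfl fun B hB => by rw [univ_inter, hk B hB], sum_const, smul_eq_mul]
  exact ⟨x, hx⟩

lemma four_mul_card_filter_mem_mul_card_filter_not_mem_le [Fintype α] {k : ℕ} (hk2 : 2 ≤ k)
    (hk : ∀ B ∈ S, #B = k) (h2 : ∀ B ∈ S, ∀ C ∈ S, B ≠ C → #(B ∩ C) = 2) (x : α) :
    4 * #{B ∈ S | x ∈ B} * #{B ∈ S | x ∉ B} ≤
      (#{B ∈ S | x ∈ B} + k - 2) * (2 * #{B ∈ S | x ∉ B} + k - 2) := by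
  obtain ⟨j, rfl⟩ : ∃ j, k = j + 2 := ⟨k - 2, by omega⟩
  set Sx := {B ∈ S | x ∈ B}
  set Sx' := {B ∈ S | x ∉ B}
  set n := #Sx
  set m := #Sx'
  set Y := univ.erase x
  have hY : ∀ t : Finset α, Y ∩ t = t.erase x := fun t => by
    rw [erase_inter, univ_inter]
  have hM : ∑ y ∈ Y, #{B ∈ Sx | y ∈ B} ^ 2 + n * 1 = n * (j + 1) + n * n * 1 := by
    refine sum_card_filter_mem_sq_add_card_mul (fun B hB => ?_) fun B hB C hC hBC => ?_
    · rw [mem_filter] at hB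
      rw [hY, card_erase_of_mem hB.2, hk B hB.1]
      omega
    · rw [mem_filter] at hB hC
      rw [inter_assoc, hY, card_erase_of_mem (mem_inter.2 ⟨hB.2, hC.2⟩), h2 B hB.1 C hC.1 hBC]
  have hG : ∑ y ∈ Y, #{C ∈ Sx' | y ∈ C} ^ 2 + m * 2 = m * (j + 2) + m * m * 2 := by
    refine sum_card_filter_mem_sq_add_card_mul (fun B hB => ?_) fun B hB C hC hBC => ?_
    · rw [mem_filter] at hB
      rw [hY, erase_eq_of_notMem hB.2, hk B hB.1]
    · rw [mem_filter] at hB hC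
      rw [inter_assoc, hY, erase_eq_of_notMem fun hx => hB.2 (mem_inter.1 hx).1,
        h2 B hB.1 C hC.1 hBC]
  have hX : ∑ y ∈ Y, #{B ∈ Sx | y ∈ B} * #{C ∈ Sx' | y ∈ C} = n * m * 2 := by
    rw [sum_card_filter_mem_mul_card_filter_mem, sum_congr rfl fun B hB =>
      sum_congr rfl (g := fun _ => 2) fun C hC => ?_]
    · simp only [sum_const, smul_eq_mul]
      ring
    rw [mem_filter] at hB hC
    have hBC : B ≠ C := by rintro rfl; exact hC.2 hB.2
    beta_reduce
    rw [inter_assoc, hY, erase_eq_of_notMem fun hx => hC.2 (mem_inter.1 hx).2,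
      h2 B hB.1 C hC.1 hBC]
  have hCS := sum_mul_sq_le_sq_mul_sq Y (fun y => #{B ∈ Sx | y ∈ B}) (fun y => #{C ∈ Sx' | y ∈ C})
  rw [hX, show ∑ y ∈ Y, #{B ∈ Sx | y ∈ B} ^ 2 = n * (n + j) by linarith,
    show ∑ y ∈ Y, #{C ∈ Sx' | y ∈ C} ^ 2 = m * (2 * m + j) by linarith] at hCS
  rw [show n + (j + 2) - 2 = n + j by omega, show 2 * m + (j + 2) - 2 = 2 * m + j by omega]
  rcases Nat.eq_zero_or_pos (n * m) with h0 | hpos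
  · simp [mul_assoc, h0]
  · exact Nat.le_of_mul_le_mul_left (by nlinarith) hpos

theorem exists_forall_mem_of_card_inter_eq_two [Fintype α] (hα : Fintype.card α = 22)
    (h6 : ∀ B ∈ S, #B = 6) (h2 : ∀ B ∈ S, ∀ C ∈ S, B ≠ C → #(B ∩ C) = 2) (hS : 21 ≤ #S) :
    ∃ x, ∀ B ∈ S, x ∈ B := by
  have : Nonempty α := Fintype.card_pos_iff.1 (by omega)
  obtain ⟨x, hx⟩ := exists_mul_le_card_mul_card_filter_mem h6
  refine ⟨x, ?_⟩
  by_contra! ⟨E, hES, hxE⟩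
  have hn15 := card_filter_mem_le_choose h2 hES hxE
  have hCS := four_mul_card_filter_mem_mul_card_filter_not_mem_le (by norm_num) h6 h2 x
  have hnm := card_filter_add_card_filter_not (s := S) (x ∈ ·)
  set n := #{B ∈ S | x ∈ B}
  set m := #{B ∈ S | x ∉ B}
  rw [h6 E hES, show Nat.choose 6 2 = 15 by rfl] at hn15
  rw [hα] at hx
  rw [show n + 6 - 2 = n + 4 by omega, show 2 * m + 6 - 2 = 2 * m + 4 by omega] at hCS
  -- `hCS` says `(n - 4) * (m - 2) ≤ 16`, while `6 ≤ n ≤ 15` and `n + m ≥ 21`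
  nlinarith

end EquiIntersecting

namespace IsWittDesign

variable {D : Finset (Finset (Fin 22))}

lemma card_filter_subset_of_card_eq_two (hD : IsWittDesign D) {T : Finset (Fin 22)} (hT : #T = 2) :
    #{β ∈ D | T ⊆ β} = 5 := by
  have := card_filter_subset_mul_sub hD.1 T fun y hy =>
    hD.2 _ (by rw [card_insert_of_notMem hy, hT])
  rw [hT, Fintype.card_fin] at this
  omega

lemma card_filter_mem (hD : IsWittDesign D) (p : Fin 22) : #{β ∈ D | p ∈ β} = 21 := by
  have := card_filter_subset_mul_sub hD.1 {p} fun y hy =>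
    hD.card_filter_subset_of_card_eq_two (card_pair (mem_singleton.not.1 hy))
  simp only [singleton_subset_iff, card_singleton, Fintype.card_fin] at this
  omega

lemma card_inter_le_two (hD : IsWittDesign D) {B C : Finset (Fin 22)} (hB : B ∈ D) (hC : C ∈ D)
    (hBC : B ≠ C) : #(B ∩ C) ≤ 2 :=
  Nat.le_of_lt_succ <|
    card_inter_lt_of_card_filter_subset_le_one (fun T hT => (hD.2 T hT).le) hB hC hBC

lemma card_inter_eq_two (hD : IsWittDesign D) {B C : Finset (Fin 22)} (hB : B ∈ D) (hC : C ∈ D)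
    (hBC : B ≠ C) (hBC' : ¬Disjoint B C) : #(B ∩ C) = 2 := by
  by_contra hne
  obtain ⟨a, ha⟩ : ∃ a, B ∩ C = {a} := card_eq_one.1 <| by
    have := hD.card_inter_le_two hB hC hBC
    have := card_pos.2 (not_disjoint_iff_nonempty_inter.1 hBC')
    omega
  have haB : a ∈ B := (mem_inter.1 (ha ▸ mem_singleton_self a)).1
  have haC : a ∈ C := (mem_inter.1 (ha ▸ mem_singleton_self a)).2
  obtain ⟨c, hcC, hca⟩ := exists_mem_ne (by rw [hD.1 C hC]; omega) a
  have hcB : c ∉ B := fun hcB => hca (mem_singleton.1 (ha ▸ mem_inter.2 ⟨hcB, hcC⟩))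
  set F := {E ∈ D | {a, c} ⊆ E}
  have hCF : C ∈ F := mem_filter.2 ⟨hC, insert_subset haC (singleton_subset_iff.2 hcC)⟩
  have hlhs : ∑ t ∈ B.erase a, #{E ∈ F | t ∈ E} = 5 := by
    rw [sum_congr rfl (g := fun _ => 1) fun t ht => ?_, sum_const, smul_eq_mul, mul_one,
      card_erase_of_mem haB, hD.1 B hB]
    obtain ⟨hta, htB⟩ := mem_erase.1 ht
    have htc : t ≠ c := by rintro rfl; exact hcB htB
    rw [filter_filter, ← hD.2 {t, a, c} (card_eq_three.2 ⟨t, a, c, hta, htc, hca.symm, rfl⟩)]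
    simp only [insert_subset_iff, singleton_subset_iff, and_comm]
  have hrhs : ∑ E ∈ F, #(B.erase a ∩ E) ≤ 4 := by
    rw [← add_sum_erase _ _ hCF, erase_inter, ha, erase_singleton, card_empty, zero_add]
    calc ∑ E ∈ F.erase C, #(B.erase a ∩ E) ≤ ∑ _E ∈ F.erase C, 1 := sum_le_sum fun E hE => by
          obtain ⟨hED, hacE⟩ := mem_filter.1 (mem_of_mem_erase hE)
          have hEB : B ≠ E := by rintro rfl; exact hcB (hacE (by simp))
          rw [erase_inter, card_erase_of_mem (mem_inter.2 ⟨haB, hacE (by simp)⟩)]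
          have := hD.card_inter_le_two hB hED hEB
          omega
      _ = 4 := by
        rw [sum_const, smul_eq_mul, mul_one, card_erase_of_mem hCF,
          hD.card_filter_subset_of_card_eq_two (card_pair hca.symm)]
  have := sum_card_filter_mem_eq_sum_card_inter (B.erase a) F
  omega

theorem exists_subset_filter_mem_of_intersecting (hD : IsWittDesign D)
    {S : Finset (Finset (Fin 22))} (hS : S ⊆ D)
    (hint : ∀ β ∈ S, ∀ γ ∈ S, β ≠ γ → ¬Disjoint β γ) (h21 : 21 ≤ #S) :
    ∃ p, S ⊆ {β ∈ D | p ∈ β} := by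
  obtain ⟨p, hp⟩ := exists_forall_mem_of_card_inter_eq_two (Fintype.card_fin 22)
    (fun β hβ => hD.1 β (hS hβ))
    (fun β hβ γ hγ hβγ => hD.card_inter_eq_two (hS hβ) (hS hγ) hβγ (hint β hβ γ hγ hβγ)) h21
  exact ⟨p, fun β hβ => mem_filter.2 ⟨hS hβ, hp β hβ⟩⟩

end IsWittDesign

/-- In the Witt graph on the 77 blocks of the 3-(22,6,1) design (blocks adjacent
iff disjoint), the maximum size of an independent set is 21, and every
independent set of size 21 consists of the blocks through some point. -/
theorem witt_graph_max_independent_sets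
    (D : Finset (Finset (Fin 22))) (hD : IsWittDesign D) :
    (∀ S ⊆ D, (∀ β ∈ S, ∀ γ ∈ S, β ≠ γ → ¬ Disjoint β γ) → S.card ≤ 21) ∧
    (∀ p : Fin 22, (D.filter fun β => p ∈ β) ⊆ D ∧
      (∀ β ∈ D.filter fun β => p ∈ β, ∀ γ ∈ D.filter fun β => p ∈ β,
        β ≠ γ → ¬ Disjoint β γ) ∧
      (D.filter fun β => p ∈ β).card = 21) ∧
    (∀ S ⊆ D, (∀ β ∈ S, ∀ γ ∈ S, β ≠ γ → ¬ Disjoint β γ) → S.card = 21 →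
      ∃ p : Fin 22, S = D.filter fun β => p ∈ β) := by
  refine ⟨fun S hS hint => ?_, fun p => ⟨filter_subset _ _, ?_, hD.card_filter_mem p⟩,
    fun S hS hint h21 => ?_⟩
  · by_contra! h22
    obtain ⟨T, hTS, hT⟩ := exists_subset_card_eq h22
    obtain ⟨p, hp⟩ := hD.exists_subset_filter_mem_of_intersecting (hTS.trans hS)
      (fun β hβ γ hγ => hint β (hTS hβ) γ (hTS hγ)) (by omega)
    have := (card_le_card hp).trans_eq (hD.card_filter_mem p)
    omega
  · intro β hβ γ hγ _
    exact not_disjoint_iff.2 ⟨p, (mem_filter.1 hβ).2, (mem_filter.1 hγ).2⟩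
  · obtain ⟨p, hp⟩ := hD.exists_subset_filter_mem_of_intersecting hS hint h21.ge
    exact ⟨p, eq_of_subset_of_card_le hp (by rw [hD.card_filter_mem p, h21])⟩
end
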